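/- arXiv:1302.6370 — 11 statements merged into one kernel-verified Lean document; each statement's English description precedes it below -/
import Mathlib

section
/- Let (X,d) be an ultrametric space. Then d̂ is a well-defined ultrametric on J_ω(X): for all μ, ν, τ ∈ J_ω(X), d̂(μ,ν) is a finite nonnegative real number, d̂(μ,ν) = 0 if and only if μ = ν, d̂(μ,ν) = d̂(ν,μ), and d̂(μ,ν) ≤ max{d̂(μ,τ), d̂(τ,ν)}. -/
open scoped ENNReal

noncomputable section

/-- A metric is an *ultrametric* if the strong triangle inequality holds. -/
def IsUltra (X : Type*) [MetricSpace X] : Prop :=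
  ∀ x y z : X, dist x y ≤ max (dist x z) (dist z y)

/-- `mmOf x α` is the max-min functional `∨ᵢ αᵢ ∧ δ_{x i}`,
`φ ↦ maxᵢ min (α i) (φ (x i))` (computed in the extended reals). -/
def mmOf {A : Type*} {n : ℕ} (x : Fin (n + 1) → A) (α : Fin (n + 1) → EReal) :
    (A → ℝ) → ℝ :=
  fun φ => (⨆ i, min (α i) ((φ (x i) : EReal))).toReal

/-- `μ` is a max-min measure of finite support, with support contained in `S`. -/
def IsMMOn {A : Type*} (S : Set A) (μ : (A → ℝ) → ℝ) : Prop :=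
  ∃ (n : ℕ) (x : Fin (n + 1) → A) (α : Fin (n + 1) → EReal),
    (∀ i, x i ∈ S) ∧ (∃ i, α i = ⊤) ∧ μ = mmOf x α

/-- `μ` is a max-min measure of finite support. -/
def IsMM {A : Type*} (μ : (A → ℝ) → ℝ) : Prop :=
  IsMMOn Set.univ μ

/-- `idemOf x α` is the idempotent measure `∨ᵢ αᵢ ⊙ δ_{x i}`,
`φ ↦ maxᵢ (α i + φ (x i))` (computed in the extended reals). -/
def idemOf {A : Type*} {n : ℕ} (x : Fin (n + 1) → A) (α : Fin (n + 1) → EReal) :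
    (A → ℝ) → ℝ :=
  fun φ => (⨆ i, (α i + (φ (x i) : EReal))).toReal

/-- `μ` is an idempotent measure of finite support, with support contained in `S`. -/
def IsIdemOn {A : Type*} (S : Set A) (μ : (A → ℝ) → ℝ) : Prop :=
  ∃ (n : ℕ) (x : Fin (n + 1) → A) (α : Fin (n + 1) → EReal),
    (∀ i, x i ∈ S) ∧ (∀ i, α i ≤ 0) ∧ (∃ i, α i = 0) ∧ μ = idemOf x α

/-- `μ` is an idempotent measure of finite support. -/
def IsIdem {A : Type*} (μ : (A → ℝ) → ℝ) : Prop :=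
  IsIdemOn Set.univ μ

/-- The Dirac measure `δ_a`. -/
def dirac {A : Type*} (a : A) : (A → ℝ) → ℝ := fun φ => φ a

/-- `FrE e r φ`: the function `φ` is constant on every open `r`-ball of the
(extended-valued) distance `e`; this is the family `𝓕_r`. -/
def FrE {A : Type*} (e : A → A → ℝ≥0∞) (r : ℝ≥0∞) (φ : A → ℝ) : Prop :=
  ∀ x y : A, e x y < r → φ x = φ y

/-- The ultrametric `d̂` on functionals:
`d̂(μ,ν) = inf {r > 0 ∣ μ φ = ν φ for every φ ∈ 𝓕_r}`. -/
def dHatE {A : Type*} (e : A → A → ℝ≥0∞) (μ ν : (A → ℝ) → ℝ) : ℝ≥0∞ :=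
  sInf {r : ℝ≥0∞ | 0 < r ∧ ∀ φ : A → ℝ, FrE e r φ → μ φ = ν φ}

/-- The pushforward `J_ω(f)` of functionals along `f`. -/
def Jmap {A B : Type*} (f : A → B) (μ : (A → ℝ) → ℝ) : (B → ℝ) → ℝ :=
  fun φ => μ (φ ∘ f)

/-- The extended distance of a metric space, as a two-variable function. -/
def eD (X : Type*) [PseudoEMetricSpace X] : X → X → ℝ≥0∞ :=
  fun x y => edist x y

/-- The monad multiplication (`ξ` for max-min measures, `ζ` for idempotent
measures): `mult M φ = M (μ ↦ μ φ)`. -/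
def mult {A : Type*} (M : (((A → ℝ) → ℝ) → ℝ) → ℝ) : (A → ℝ) → ℝ :=
  fun φ => M fun μ => μ φ

/-
`d̂` is an infimum over radii `r` at which `μ` and `ν` agree on `𝓕_r`, and `𝓕_r ⊆ 𝓕_s` for
`s ≤ r`; symmetry, `d̂(μ,μ) = 0` and the strong triangle inequality follow from this alone.
A max-min measure of finite support only sees the values of `φ` on its finite support `S`.
Radii beyond the diameter of `S` force `φ` to be constant on `S`, where both measures return
that constant, so `d̂ < ∞`. Conversely, for `r` the minimal separation of `S`, the ultrametric
inequality makes `d(x,y) < r` an equivalence relation whose classes meet `S` in at most one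
point, so every `φ` agrees on `S` with a function of `𝓕_r`; hence `d̂(μ,ν) = 0` forces `μ = ν`.
-/
section dHatE

variable {A : Type*} {e : A → A → ℝ≥0∞} {r s : ℝ≥0∞} {φ : A → ℝ} {μ ν : (A → ℝ) → ℝ}

theorem FrE.mono (hφ : FrE e r φ) (hsr : s ≤ r) : FrE e s φ :=
  fun x y hxy => hφ x y (hxy.trans_le hsr)

theorem dHatE_le (hr : 0 < r) (h : ∀ φ, FrE e r φ → μ φ = ν φ) : dHatE e μ ν ≤ r :=
  sInf_le ⟨hr, h⟩

theorem apply_eq_of_dHatE_lt (h : dHatE e μ ν < r) (hφ : FrE e r φ) : μ φ = ν φ := by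
  obtain ⟨s, ⟨-, hs⟩, hsr⟩ := sInf_lt_iff.mp h
  exact hs φ (hφ.mono hsr.le)

variable (e)

theorem dHatE_comm (μ ν : (A → ℝ) → ℝ) : dHatE e μ ν = dHatE e ν μ := by
  simp only [dHatE, eq_comm (a := μ _)]

theorem dHatE_self (μ : (A → ℝ) → ℝ) : dHatE e μ μ = 0 :=
  le_antisymm (le_of_forall_gt_imp_ge_of_dense fun _ hr => dHatE_le hr fun _ _ => rfl) bot_le

theorem dHatE_le_max (μ ν τ : (A → ℝ) → ℝ) :
    dHatE e μ ν ≤ max (dHatE e μ τ) (dHatE e τ ν) := by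
  refine le_of_forall_gt_imp_ge_of_dense fun r hr => ?_
  obtain ⟨hμτ, hτν⟩ := max_lt_iff.mp hr
  exact dHatE_le (zero_le.trans_lt hr) fun φ hφ =>
    (apply_eq_of_dHatE_lt hμτ hφ).trans (apply_eq_of_dHatE_lt hτν hφ)

end dHatE

section MaxMin

variable {A : Type*} {S T : Set A} {μ : (A → ℝ) → ℝ} {φ ψ : A → ℝ}

theorem mmOf_congr {n : ℕ} (x : Fin (n + 1) → A) (α : Fin (n + 1) → EReal)
    (h : ∀ i, φ (x i) = ψ (x i)) : mmOf x α φ = mmOf x α ψ := by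
  simp only [mmOf, h]

theorem mmOf_eq_of_forall_eq {n : ℕ} {x : Fin (n + 1) → A} {α : Fin (n + 1) → EReal}
    (htop : ∃ i, α i = ⊤) {c : ℝ} (h : ∀ i, φ (x i) = c) : mmOf x α φ = c := by
  obtain ⟨i₀, hi₀⟩ := htop
  have hsup : (⨆ i, min (α i) (φ (x i) : EReal)) = c :=
    le_antisymm (iSup_le fun i => h i ▸ min_le_right _ _)
      (le_iSup_of_le i₀ (by rw [hi₀, h i₀, min_eq_right le_top]))
  rw [mmOf, hsup, EReal.toReal_coe]

theorem IsMM.exists_finite_isMMOn (hμ : IsMM μ) : ∃ S : Set A, S.Finite ∧ IsMMOn S μ := by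
  obtain ⟨n, x, α, -, htop, rfl⟩ := hμ
  exact ⟨Set.range x, Set.finite_range x, n, x, α, Set.mem_range_self, htop, rfl⟩

theorem IsMMOn.mono (hμ : IsMMOn S μ) (hST : S ⊆ T) : IsMMOn T μ := by
  obtain ⟨n, x, α, hx, htop, rfl⟩ := hμ
  exact ⟨n, x, α, fun i => hST (hx i), htop, rfl⟩

theorem IsMMOn.nonempty (hμ : IsMMOn S μ) : S.Nonempty := by
  obtain ⟨n, x, α, hx, -⟩ := hμ
  exact ⟨x 0, hx 0⟩

theorem IsMMOn.apply_congr (hμ : IsMMOn S μ) (h : Set.EqOn φ ψ S) : μ φ = μ ψ := by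
  obtain ⟨n, x, α, hx, -, rfl⟩ := hμ
  exact mmOf_congr x α fun i => h (hx i)

theorem IsMMOn.apply_eq_of_forall_eq (hμ : IsMMOn S μ) {c : ℝ} (h : ∀ a ∈ S, φ a = c) :
    μ φ = c := by
  obtain ⟨n, x, α, hx, htop, rfl⟩ := hμ
  exact mmOf_eq_of_forall_eq htop fun i => h _ (hx i)

end MaxMin

theorem dHatE_lt_top_of_isMMOn {X : Type*} [PseudoEMetricSpace X] {S : Set X}
    (hS : Metric.ediam S ≠ ⊤) {μ ν : (X → ℝ) → ℝ} (hμ : IsMMOn S μ) (hν : IsMMOn S ν) :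
    dHatE (eD X) μ ν < ⊤ := by
  obtain ⟨a, ha⟩ := hμ.nonempty
  have hr : Metric.ediam S < Metric.ediam S + 1 := ENNReal.lt_add_right hS one_ne_zero
  refine (dHatE_le (zero_le.trans_lt hr) fun φ hφ => ?_).trans_lt
    (ENNReal.add_lt_top.mpr ⟨hS.lt_top, ENNReal.one_lt_top⟩)
  have hconst : ∀ b ∈ S, φ b = φ a := fun b hb =>
    hφ b a ((Metric.edist_le_ediam_of_mem hb ha).trans_lt hr)
  rw [hμ.apply_eq_of_forall_eq hconst, hν.apply_eq_of_forall_eq hconst]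

theorem IsUltra.isUltrametricDist {X : Type*} [MetricSpace X] (hX : IsUltra X) :
    IsUltrametricDist X :=
  ⟨fun x y z => hX x z y⟩

section Ultrametric

variable {X : Type*} [PseudoMetricSpace X] [IsUltrametricDist X]

theorem IsUltrametricDist.edist_triangle_max (x y z : X) :
    edist x z ≤ max (edist x y) (edist y z) := by
  simpa only [edist_dist, ENNReal.ofReal_max] using
    ENNReal.ofReal_le_ofReal (IsUltrametricDist.dist_triangle_max x y z)

variable (X) in
def ultraBallSetoid {r : ℝ≥0∞} (hr : 0 < r) : Setoid X where
  r x y := edist x y < r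
  iseqv :=
    { refl := fun x => by rwa [edist_self]
      symm := fun h => by rwa [edist_comm]
      trans := fun hxy hyz =>
        (IsUltrametricDist.edist_triangle_max _ _ _).trans_lt (max_lt hxy hyz) }

theorem exists_frE_eqOn {S : Set X} {r : ℝ≥0∞} (hr : 0 < r) (hrS : r ≤ S.einfsep)
    (φ : X → ℝ) : ∃ ψ : X → ℝ, FrE (eD X) r ψ ∧ Set.EqOn ψ φ S := by
  let s := ultraBallSetoid X hr
  let cls : S → Quotient s := fun p => Quotient.mk s p
  have hcls : Function.Injective cls := fun p q hpq => by
    by_contra hne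
    exact (Quotient.exact hpq).not_ge
      (hrS.trans (Set.einfsep_le_edist_of_mem p.2 q.2 (Subtype.coe_ne_coe.mpr hne)))
  refine ⟨fun a => Function.extend cls (fun p => φ p) 0 (Quotient.mk s a), ?_, ?_⟩
  · intro a b hab
    simp only [Quotient.sound (s := s) hab]
  · intro a ha
    exact hcls.extend_apply _ _ ⟨a, ha⟩

end Ultrametric

theorem eq_of_dHatE_eq_zero_of_isMMOn {X : Type*} [MetricSpace X] [IsUltrametricDist X]
    {S : Set X} (hS : S.Finite) {μ ν : (X → ℝ) → ℝ} (hμ : IsMMOn S μ) (hν : IsMMOn S ν)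
    (h : dHatE (eD X) μ ν = 0) : μ = ν := by
  have : Finite S := hS
  have hsep : 0 < S.einfsep := Set.einfsep_pos_of_finite
  funext φ
  obtain ⟨ψ, hψ, hψφ⟩ := exists_frE_eqOn hsep le_rfl φ
  calc μ φ = μ ψ := hμ.apply_congr hψφ.symm
    _ = ν ψ := apply_eq_of_dHatE_lt (h ▸ hsep) hψ
    _ = ν φ := hν.apply_congr hψφ

theorem dHat_is_ultrametric_general {X : Type*} [MetricSpace X] (hX : IsUltra X)
    (μ ν τ : (X → ℝ) → ℝ) (hμ : IsMM μ) (hν : IsMM ν) :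
    dHatE (eD X) μ ν < ⊤ ∧
    (dHatE (eD X) μ ν = 0 ↔ μ = ν) ∧
    dHatE (eD X) μ ν = dHatE (eD X) ν μ ∧
    dHatE (eD X) μ ν ≤ max (dHatE (eD X) μ τ) (dHatE (eD X) τ ν) := by
  have := hX.isUltrametricDist
  obtain ⟨S, hS, hμS⟩ := hμ.exists_finite_isMMOn
  obtain ⟨T, hT, hνT⟩ := hν.exists_finite_isMMOn
  have hμ' := hμS.mono (Set.subset_union_left (t := T))
  have hν' := hνT.mono (Set.subset_union_right (s := S))
  exact ⟨dHatE_lt_top_of_isMMOn (hS.union hT).isBounded.ediam_ne_top hμ' hν',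
    ⟨eq_of_dHatE_eq_zero_of_isMMOn (hS.union hT) hμ' hν', fun h => h ▸ dHatE_self _ _⟩,
    dHatE_comm _ _ _, dHatE_le_max _ _ _ _⟩

/-- For an ultrametric space `(X,d)`, `d̂` is a well-defined
ultrametric on `J_ω(X)`: it is finite (hence, being an element of `ℝ≥0∞`, a
nonnegative real number), vanishes exactly on the diagonal, is symmetric and
satisfies the strong triangle inequality. -/
theorem dHat_is_ultrametric {X : Type*} [MetricSpace X] (hX : IsUltra X)
    (μ ν τ : (X → ℝ) → ℝ) (hμ : IsMM μ) (hν : IsMM ν) (hτ : IsMM τ) :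
    dHatE (eD X) μ ν < ⊤ ∧
    (dHatE (eD X) μ ν = 0 ↔ μ = ν) ∧
    dHatE (eD X) μ ν = dHatE (eD X) ν μ ∧
    dHatE (eD X) μ ν ≤ max (dHatE (eD X) μ τ) (dHatE (eD X) τ ν) :=
  dHat_is_ultrametric_general hX μ ν τ hμ hν

end
end

section
/- Let f : (X,d) → (Y,ρ) be a nonexpanding map between ultrametric spaces. Then the induced map J_ω(f) : (J_ω(X), d̂) → (J_ω(Y), ρ̂) is nonexpanding. -/
open scoped ENNReal

noncomputable section

theorem FrE.comp {A B : Type*} {e : A → A → ℝ≥0∞} {e' : B → B → ℝ≥0∞} {f : A → B}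
    (hf : ∀ a b, e' (f a) (f b) ≤ e a b) {r : ℝ≥0∞} {φ : B → ℝ} (hφ : FrE e' r φ) :
    FrE e r (φ ∘ f) :=
  fun a b hab => hφ (f a) (f b) ((hf a b).trans_lt hab)

theorem dHatE_Jmap_le {A B : Type*} {e : A → A → ℝ≥0∞} {e' : B → B → ℝ≥0∞} {f : A → B}
    (hf : ∀ a b, e' (f a) (f b) ≤ e a b) (μ ν : (A → ℝ) → ℝ) :
    dHatE e' (Jmap f μ) (Jmap f ν) ≤ dHatE e μ ν :=
  sInf_le_sInf fun _ ⟨hr, hμν⟩ => ⟨hr, fun _ hφ => hμν _ (hφ.comp hf)⟩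

theorem Jmap_nonexpanding_general {X Y : Type*} [MetricSpace X] [MetricSpace Y]
    (f : X → Y) (hf : ∀ a b : X, dist (f a) (f b) ≤ dist a b)
    (μ ν : (X → ℝ) → ℝ) :
    dHatE (eD Y) (Jmap f μ) (Jmap f ν) ≤ dHatE (eD X) μ ν :=
  dHatE_Jmap_le (fun a b => by
    simpa only [eD, edist_dist] using ENNReal.ofReal_le_ofReal (hf a b)) μ ν

/-- If `f : (X,d) → (Y,ρ)` is a nonexpanding map between
ultrametric spaces, then `J_ω(f) : (J_ω(X), d̂) → (J_ω(Y), ρ̂)` is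
nonexpanding. -/
theorem Jmap_nonexpanding {X Y : Type*} [MetricSpace X] [MetricSpace Y]
    (hX : IsUltra X) (hY : IsUltra Y)
    (f : X → Y) (hf : ∀ a b : X, dist (f a) (f b) ≤ dist a b)
    (μ ν : (X → ℝ) → ℝ) (hμ : IsMM μ) (hν : IsMM ν) :
    dHatE (eD Y) (Jmap f μ) (Jmap f ν) ≤ dHatE (eD X) μ ν :=
  Jmap_nonexpanding_general f hf μ ν

end
end

section
/- Let (X,d) be an ultrametric space, let r > 0, and let μ, ν ∈ J_ω(X). Then d̂(μ,ν) < r if and only if J_ω(q_r)(μ) = J_ω(q_r)(ν). -/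
open scoped ENNReal

noncomputable section

/-!
A max-min measure of finite support only reads a function at its finitely many support points.
Among the distances `< r` between those points there is a largest one, so some `r' < r` exceeds
all of them; a function constant on `r'`-balls is then constant on the traces of the fibres of
`q` on the support, hence agrees there with some `ψ ∘ q`. Conversely, every `ψ ∘ q` is constant
on `s`-balls for each `s ≤ r`.
-/

open Set Filter Function Topology

theorem dependsOn_mmOf {A : Type*} {n : ℕ} (x : Fin (n + 1) → A) (α : Fin (n + 1) → EReal) :
    DependsOn (mmOf x α) (range x) := fun φ φ' h => by
  simp only [mmOf, h _ (mem_range_self _)]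

theorem IsMM.exists_finite_dependsOn {A : Type*} {μ : (A → ℝ) → ℝ} (hμ : IsMM μ) :
    ∃ S : Set A, S.Finite ∧ DependsOn μ S := by
  obtain ⟨n, x, α, -, -, rfl⟩ := hμ
  exact ⟨range x, finite_range x, dependsOn_mmOf x α⟩

theorem Set.Finite.eventually_forall_dist_lt_of_dist_lt {X : Type*} [PseudoMetricSpace X]
    {S : Set X} (hS : S.Finite) (r : ℝ) :
    ∀ᶠ r' in 𝓝[<] r, ∀ a ∈ S, ∀ b ∈ S, dist a b < r → dist a b < r' := by
  refine hS.eventually_all.2 fun a _ => hS.eventually_all.2 fun b _ => ?_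
  by_cases hab : dist a b < r
  · filter_upwards [Ioo_mem_nhdsLT hab] with r' hr' _ using hr'.1
  · exact Eventually.of_forall fun _ h => absurd h hab

theorem Function.FactorsThrough.exists_eqOn_comp {α β γ : Type*} [Nonempty γ] {f : α → β}
    {g : α → γ} {S : Set α} (h : FactorsThrough (S.domRestrict g) (S.domRestrict f)) :
    ∃ ψ : β → γ, EqOn (ψ ∘ f) g S :=
  ⟨extend (S.domRestrict f) (S.domRestrict g) fun _ => Classical.arbitrary γ,
    fun a ha => h.extend_apply _ ⟨a, ha⟩⟩

section Pushforward

variable {X Q : Type*} [MetricSpace X] {r : ℝ} {q : X → Q} {μ ν : (X → ℝ) → ℝ}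

theorem jmap_eq_of_dHatE_lt (hq : ∀ a b : X, dist a b < r → q a = q b)
    (h : dHatE (eD X) μ ν < ENNReal.ofReal r) : Jmap q μ = Jmap q ν := by
  obtain ⟨s, ⟨-, hs⟩, hsr⟩ := sInf_lt_iff.mp h
  funext ψ
  exact hs (ψ ∘ q) fun a b hab => congrArg ψ (hq a b (edist_lt_ofReal.1 (hab.trans hsr)))

theorem dHatE_lt_of_jmap_eq {S : Set X} (hS : S.Finite) (hμ : DependsOn μ S)
    (hν : DependsOn ν S) (hr : 0 < r) (hq : ∀ a b : X, q a = q b → dist a b < r)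
    (h : Jmap q μ = Jmap q ν) : dHatE (eD X) μ ν < ENNReal.ofReal r := by
  obtain ⟨r', hS', hr'0, hr'r⟩ :=
    ((hS.eventually_forall_dist_lt_of_dist_lt r).and (Ioo_mem_nhdsLT hr)).exists
  refine lt_of_le_of_lt (sInf_le ?_) ((ENNReal.ofReal_lt_ofReal_iff hr).2 hr'r)
  refine ⟨ENNReal.ofReal_pos.2 hr'0, fun φ hφ => ?_⟩
  have hfac : FactorsThrough (S.domRestrict φ) (S.domRestrict q) := fun a b hab =>
    hφ a b (edist_lt_ofReal.2 (hS' a a.2 b b.2 (hq a b hab)))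
  obtain ⟨ψ, hψ⟩ := hfac.exists_eqOn_comp
  calc μ φ = μ (ψ ∘ q) := hμ fun a ha => (hψ ha).symm
    _ = ν (ψ ∘ q) := congrFun h ψ
    _ = ν φ := hν fun a ha => hψ ha

end Pushforward

/-- The quotient map `q_r : X → X/𝒪_r` is modelled by any map `q` whose fibres are exactly
the open `r`-balls. -/
theorem dHat_lt_iff_quotient_pushforwards_eq_general {X : Type*} [MetricSpace X]
    {r : ℝ} (hr : 0 < r)
    {Q : Type*} (q : X → Q) (hq : ∀ a b : X, q a = q b ↔ dist a b < r)
    (μ ν : (X → ℝ) → ℝ) (hμ : IsMM μ) (hν : IsMM ν) :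
    dHatE (eD X) μ ν < ENNReal.ofReal r ↔ Jmap q μ = Jmap q ν := by
  obtain ⟨S, hS, hμS⟩ := hμ.exists_finite_dependsOn
  obtain ⟨T, hT, hνT⟩ := hν.exists_finite_dependsOn
  exact ⟨jmap_eq_of_dHatE_lt fun a b => (hq a b).2,
    dHatE_lt_of_jmap_eq (hS.union hT) (hμS.mono subset_union_left)
      (hνT.mono subset_union_right) hr fun a b => (hq a b).1⟩

/-- For an ultrametric space `(X,d)`, `r > 0` and
`μ, ν ∈ J_ω(X)`: `d̂(μ,ν) < r` iff `J_ω(q_r)(μ) = J_ω(q_r)(ν)`, where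
`q_r : X → X/𝒪_r` is the quotient map identifying points at distance `< r`
(formalized as any map `q` whose fibres are exactly the open `r`-balls). -/
theorem dHat_lt_iff_quotient_pushforwards_eq {X : Type*} [MetricSpace X]
    (hX : IsUltra X) {r : ℝ} (hr : 0 < r)
    {Q : Type*} (q : X → Q) (hq : ∀ a b : X, q a = q b ↔ dist a b < r)
    (μ ν : (X → ℝ) → ℝ) (hμ : IsMM μ) (hν : IsMM ν) :
    dHatE (eD X) μ ν < ENNReal.ofReal r ↔ Jmap q μ = Jmap q ν :=
  dHat_lt_iff_quotient_pushforwards_eq_general hr q hq μ ν hμ hν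

end
end

section
/- Let f, g : (X,d) → (Y,ρ) be nonexpanding maps between ultrametric spaces. Then sup{ρ̂(J_ω(f)(μ), J_ω(g)(μ)) : μ ∈ J_ω(X)} ≤ sup{ρ(f(x), g(x)) : x ∈ X}, as elements of [0,∞] (i.e., the functor J_ω is locally non-expansive). -/
open scoped ENNReal

noncomputable section

/-! If `r` exceeds every distance `ρ(f x, g x)`, then each `φ ∈ 𝓕_r` takes the same value at
`f x` and `g x`, so `φ ∘ f = φ ∘ g` and `J_ω(f)(μ)`, `J_ω(g)(μ)` agree on `𝓕_r`; hence
`ρ̂(J_ω(f)(μ), J_ω(g)(μ)) ≤ r`. -/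

section

variable {A B : Type*}

theorem FrE.comp_eq_comp {e : B → B → ℝ≥0∞} {r : ℝ≥0∞} {φ : B → ℝ} (hφ : FrE e r φ)
    {f g : A → B} (hfg : ∀ x, e (f x) (g x) < r) : φ ∘ f = φ ∘ g :=
  funext fun x => hφ (f x) (g x) (hfg x)

theorem dHatE_le_of_forall_FrE {e : A → A → ℝ≥0∞} {μ ν : (A → ℝ) → ℝ} {r : ℝ≥0∞}
    (hr : 0 < r) (h : ∀ φ, FrE e r φ → μ φ = ν φ) : dHatE e μ ν ≤ r :=
  sInf_le ⟨hr, h⟩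

theorem dHatE_Jmap_le_iSup (e : B → B → ℝ≥0∞) (f g : A → B) (μ : (A → ℝ) → ℝ) :
    dHatE e (Jmap f μ) (Jmap g μ) ≤ ⨆ x, e (f x) (g x) := by
  refine le_of_forall_gt_imp_ge_of_dense fun r hr =>
    dHatE_le_of_forall_FrE (pos_of_gt hr) fun φ hφ => ?_
  exact congrArg μ <|
    hφ.comp_eq_comp fun x => (le_iSup (fun x => e (f x) (g x)) x).trans_lt hr

end

theorem Jomega_locally_nonexpansive_general {X Y : Type*} [MetricSpace X] [MetricSpace Y]
    (f g : X → Y) :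
    (⨆ μ : {μ : (X → ℝ) → ℝ // IsMM μ},
        dHatE (eD Y) (Jmap f μ.1) (Jmap g μ.1)) ≤
      ⨆ x : X, edist (f x) (g x) :=
  iSup_le fun μ => dHatE_Jmap_le_iSup (eD Y) f g μ.1

/-- The functor `J_ω` is locally non-expansive: for
nonexpanding maps `f, g : (X,d) → (Y,ρ)` between ultrametric spaces,
`sup_{μ ∈ J_ω(X)} ρ̂(J_ω(f)(μ), J_ω(g)(μ)) ≤ sup_{x ∈ X} ρ(f x, g x)`
in `[0,∞]`. -/
theorem Jomega_locally_nonexpansive {X Y : Type*} [MetricSpace X] [MetricSpace Y]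
    (hX : IsUltra X) (hY : IsUltra Y) (f g : X → Y)
    (hf : ∀ a b : X, dist (f a) (f b) ≤ dist a b)
    (hg : ∀ a b : X, dist (g a) (g b) ≤ dist a b) :
    (⨆ μ : {μ : (X → ℝ) → ℝ // IsMM μ},
        dHatE (eD Y) (Jmap f μ.1) (Jmap g μ.1)) ≤
      ⨆ x : X, edist (f x) (g x) :=
  Jomega_locally_nonexpansive_general f g

end
end

section
/- Let (X,d) be an ultrametric space. Define h_X : I_ω(X) → J_ω(X) by h_X(∨_i α_i ⊙ δ_{x_i}) = ∨_i λ(α_i) ∧ δ_{x_i}, where λ : [−∞,0] → [−∞,+∞] is given by λ(t) = −ln(−t) for t ∈ (−∞,0), λ(−∞) = −∞ and λ(0) = +∞. Then h_X is a well-defined bijection and an isometry: d̂(h_X(μ), h_X(ν)) = d̂(μ,ν) for all μ, ν ∈ I_ω(X). In particular, the spaces (I_ω(X), d̂) and (J_ω(X), d̂) are isometric. -/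
open scoped ENNReal

noncomputable section

/-- The order-preserving bijection `λ : [-∞,0] → [-∞,+∞]`:
`λ(t) = -ln(-t)` for `t ∈ (-∞,0)`, `λ(-∞) = -∞`, `λ(0) = +∞`. -/
def lam (t : EReal) : EReal :=
  if t = ⊥ then ⊥ else if t = 0 then ⊤ else ((-Real.log (-t.toReal) : ℝ) : EReal)


/-!
Fix an equivalence relation `E` on `X`: equality, or "being at distance `< r`", which is an
equivalence because `d` is an ultrametric. On `E`-invariant functions, both `∨ αᵢ ⊙ δ_{xᵢ}` and
`∨ λ(αᵢ) ∧ δ_{xᵢ}` depend only on the class weights `p ↦ max {αᵢ ∣ xᵢ E p}`, and conversely the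
class weights can be read off from the values on functions taking one value on a class and a
smaller one off it. Hence two idempotent measures agree on all `E`-invariant functions iff their
images under `h_X` do. For `E` equality this says that `h_X` is well defined and injective; for
the `r`-ball relations it says that the sets of radii defining `d̂` coincide.
-/

open Set
open scoped Classical

lemma EReal.eq_of_forall_max_coe_eq {a b : EReal} (ha : a ≤ 0) (hb : b ≤ 0)
    (h : ∀ d : ℝ, d ≤ 0 → max a d = max b d) : a = b := by
  by_contra hne
  wlog hab : a < b generalizing a b
  · exact this hb ha (fun d hd => (h d hd).symm) (Ne.symm hne)
      ((Ne.symm hne).lt_of_le (not_lt.1 hab))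
  obtain ⟨d, had, hdb⟩ := EReal.exists_between_coe_real hab
  have hd := h d (by exact_mod_cast (hdb.trans_le hb).le)
  rw [max_eq_right had.le, max_eq_left hdb.le] at hd
  exact hdb.ne hd

lemma EReal.eq_of_forall_max_min_coe_eq {a b : EReal}
    (h : ∀ c d : ℝ, d ≤ c → max (min a c) d = max (min b c) d) : a = b := by
  by_contra hne
  wlog hab : a < b generalizing a b
  · exact this (fun c d hdc => (h c d hdc).symm) (Ne.symm hne)
      ((Ne.symm hne).lt_of_le (not_lt.1 hab))
  obtain ⟨c, hac, hcb⟩ := EReal.exists_between_coe_real hab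
  obtain ⟨d, had, hdc⟩ := EReal.exists_between_coe_real hac
  have hcd := h c d (by exact_mod_cast hdc.le)
  rw [min_eq_left hac.le, min_eq_right hcb.le, max_eq_right had.le, max_eq_left hdc.le] at hcd
  exact hdc.ne hcd

section Lam

lemma lam_bot : lam ⊥ = ⊥ := by simp [lam]

lemma lam_zero : lam 0 = ⊤ := by simp [lam]

lemma lam_coe {r : ℝ} (hr : r ≠ 0) : lam r = ((-Real.log (-r) : ℝ) : EReal) := by
  simp [lam, hr]

lemma lam_strictMonoOn : StrictMonoOn lam (Iic 0) := by
  intro a _ b hb hab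
  induction b using EReal.rec with
  | bot => exact absurd hab not_lt_bot
  | top => simp at hb
  | coe s =>
    rcases (EReal.coe_nonpos.1 hb).lt_or_eq with hs | rfl
    · rw [lam_coe hs.ne]
      induction a using EReal.rec with
      | bot =>
        rw [lam_bot]
        exact EReal.bot_lt_coe _
      | top => simp at hab
      | coe r =>
        have hrs : r < s := by exact_mod_cast hab
        rw [lam_coe (by linarith)]
        exact_mod_cast neg_lt_neg (Real.log_lt_log (by linarith) (by linarith))
    · rw [EReal.coe_zero, lam_zero, lt_top_iff_ne_top]
      induction a using EReal.rec with
      | bot => simp [lam_bot]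
      | top => simp at hab
      | coe r =>
        have hr : r < 0 := by exact_mod_cast hab
        simp [lam_coe hr.ne]

lemma lam_surjOn : SurjOn lam (Iic 0) univ := by
  intro s _
  induction s using EReal.rec with
  | bot => exact ⟨⊥, mem_Iic.2 bot_le, lam_bot⟩
  | top => exact ⟨0, mem_Iic.2 le_rfl, lam_zero⟩
  | coe u =>
    refine ⟨(-Real.exp (-u) : ℝ), ?_, ?_⟩
    · exact mem_Iic.2 (by exact_mod_cast neg_nonpos.2 (Real.exp_pos _).le)
    · rw [lam_coe (neg_ne_zero.2 (Real.exp_pos _).ne')]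
      simp

end Lam

section ClassWeight

variable {X : Type*} {n : ℕ}

def classWeight (E : X → X → Prop) (x : Fin (n + 1) → X) (α : Fin (n + 1) → EReal) (p : X) :
    EReal :=
  ⨆ (i) (_ : E (x i) p), α i

variable {E : X → X → Prop} {x : Fin (n + 1) → X} {α : Fin (n + 1) → EReal}

lemma le_classWeight {i : Fin (n + 1)} {p : X} (h : E (x i) p) : α i ≤ classWeight E x α p :=
  le_iSup₂ (f := fun i (_ : E (x i) p) => α i) i h

lemma classWeight_le_zero (hα : ∀ i, α i ≤ 0) (p : X) : classWeight E x α p ≤ 0 :=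
  iSup₂_le fun i _ => hα i

lemma classWeight_eq_bot_or_exists (E : X → X → Prop) (x : Fin (n + 1) → X)
    (α : Fin (n + 1) → EReal) (p : X) :
    classWeight E x α p = ⊥ ∨ ∃ i, E (x i) p ∧ α i = classWeight E x α p := by
  obtain ⟨i, hi⟩ := Finite.exists_max fun i => ⨆ _ : E (x i) p, α i
  have hsup : classWeight E x α p = ⨆ _ : E (x i) p, α i := le_antisymm (iSup_le hi)
    (le_iSup (fun i => ⨆ _ : E (x i) p, α i) i)
  by_cases h : E (x i) p
  · exact Or.inr ⟨i, h, by rw [hsup, iSup_pos h]⟩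
  · exact Or.inl (by rw [hsup, iSup_neg h])

end ClassWeight

/-- `k a r` is the contribution of a point of weight `a` at which the function takes the value
`r`: `a + r` for idempotent measures, `min (λ a) r` for max-min measures. -/
structure IsWeighting (k : EReal → ℝ → EReal) : Prop where
  monotoneOn : ∀ r, MonotoneOn (k · r) (Iic 0)
  bot : ∀ r, k ⊥ r = ⊥
  zero : ∀ r, k 0 r = r
  separating : ∀ a ∈ Iic 0, ∀ b ∈ Iic 0,
    (∀ c d : ℝ, d ≤ c → max (k a c) d = max (k b c) d) → a = b

def weightedSup {X : Type*} {n : ℕ} (k : EReal → ℝ → EReal) (x : Fin (n + 1) → X)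
    (α : Fin (n + 1) → EReal) (φ : X → ℝ) : ℝ :=
  (⨆ i, k (α i) (φ (x i))).toReal

namespace IsWeighting

variable {k : EReal → ℝ → EReal} {X : Type*} {n m : ℕ} {E : X → X → Prop}
  {x : Fin (n + 1) → X} {y : Fin (m + 1) → X} {α : Fin (n + 1) → EReal} {β : Fin (m + 1) → EReal}

lemma add : IsWeighting fun a r => a + r where
  monotoneOn _ _ _ _ _ hab := add_le_add hab le_rfl
  bot _ := EReal.bot_add _
  zero _ := zero_add _
  separating a ha b hb h :=
    EReal.eq_of_forall_max_coe_eq ha hb fun d hd => by simpa using h 0 d hd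

lemma minLam : IsWeighting fun a r => min (lam a) r where
  monotoneOn _ _ ha _ hb hab := min_le_min_right _ (lam_strictMonoOn.monotoneOn ha hb hab)
  bot _ := by simp [lam_bot]
  zero _ := by simp [lam_zero]
  separating a ha b hb h := lam_strictMonoOn.injOn ha hb (EReal.eq_of_forall_max_min_coe_eq h)

lemma apply_le (hk : IsWeighting k) {a : EReal} (ha : a ≤ 0) (r : ℝ) : k a r ≤ r :=
  hk.zero r ▸ hk.monotoneOn r ha (mem_Iic.2 le_rfl) ha

lemma iSup_eq_iSup_classWeight (hk : IsWeighting k) (hE : ∀ a, E a a) (hα : ∀ i, α i ≤ 0)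
    {φ : X → ℝ} (hφ : ∀ a b, E a b → φ a = φ b) :
    ⨆ i, k (α i) (φ (x i)) = ⨆ p, k (classWeight E x α p) (φ p) := by
  apply le_antisymm
  · refine iSup_le fun i => le_iSup_of_le (x i) ?_
    exact hk.monotoneOn _ (hα i) (classWeight_le_zero hα _) (le_classWeight (hE _))
  · refine iSup_le fun p => ?_
    rcases classWeight_eq_bot_or_exists E x α p with h | ⟨i, hi, hval⟩
    · rw [h, hk.bot]
      exact bot_le
    · rw [← hval, ← hφ _ _ hi]
      exact le_iSup (fun i => k (α i) (φ (x i))) i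

lemma iSup_indicator_class (hk : IsWeighting k) (hE : ∀ a b, E a b → E b a) (hα : ∀ i, α i ≤ 0)
    (hα₀ : ∃ i, α i = 0) {c d : ℝ} (hdc : d ≤ c) (p : X) :
    ⨆ i, k (α i) (if E p (x i) then c else d) = max (k (classWeight E x α p) c) d := by
  apply le_antisymm
  · refine iSup_le fun i => ?_
    split_ifs with hi
    · exact le_max_of_le_left <| hk.monotoneOn _ (hα i) (classWeight_le_zero hα p)
        (le_classWeight (hE _ _ hi))
    · exact le_max_of_le_right (hk.apply_le (hα i) d)
  · refine max_le ?_ ?_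
    · rcases classWeight_eq_bot_or_exists E x α p with h | ⟨i, hi, hval⟩
      · rw [h, hk.bot]
        exact bot_le
      · refine le_iSup_of_le i ?_
        rw [if_pos (hE _ _ hi), hval]
    · obtain ⟨i, hi⟩ := hα₀
      refine le_iSup_of_le i ?_
      rw [hi, hk.zero]
      split_ifs
      · exact_mod_cast hdc
      · exact le_rfl

lemma weightedSup_agree_iff (hk : IsWeighting k) (hE : Equivalence E)
    (hα : ∀ i, α i ≤ 0) (hβ : ∀ j, β j ≤ 0) (hα₀ : ∃ i, α i = 0) (hβ₀ : ∃ j, β j = 0) :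
    (∀ φ : X → ℝ, (∀ a b, E a b → φ a = φ b) → weightedSup k x α φ = weightedSup k y β φ) ↔
      ∀ p, classWeight E x α p = classWeight E y β p := by
  constructor
  · intro h p
    refine hk.separating _ (classWeight_le_zero hα p) _ (classWeight_le_zero hβ p)
      fun c d hdc => ?_
    have hφ : ∀ a b, E a b → (if E p a then c else d) = if E p b then c else d := fun a b hab =>
      if_congr ⟨fun h => hE.trans h hab, fun h => hE.trans h (hE.symm hab)⟩ rfl rfl
    have hval := h _ hφ
    simp only [weightedSup] at hval
    rw [hk.iSup_indicator_class (E := E) (fun _ _ => hE.symm) hα hα₀ hdc,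
      hk.iSup_indicator_class (E := E) (fun _ _ => hE.symm) hβ hβ₀ hdc]
      at hval
    have hfin : ∀ a ≤ 0, max (k a c) d ≠ ⊤ ∧ max (k a c) d ≠ ⊥ := fun a ha =>
      ⟨ne_top_of_le_ne_top (EReal.coe_ne_top (max c d)) (max_le_max (hk.apply_le ha c) le_rfl),
        ne_bot_of_le_ne_bot (EReal.coe_ne_bot d) (le_max_right _ _)⟩
    obtain ⟨hαt, hαb⟩ := hfin _ (classWeight_le_zero hα p)
    obtain ⟨hβt, hβb⟩ := hfin _ (classWeight_le_zero hβ p)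
    exact (EReal.toReal_eq_toReal hαt hαb hβt hβb).1 hval
  · intro h φ hφ
    simp only [weightedSup, hk.iSup_eq_iSup_classWeight hE.refl hα hφ,
      hk.iSup_eq_iSup_classWeight hE.refl hβ hφ, h]

end IsWeighting

lemma IsUltra.equivalence_edist_lt {X : Type*} [MetricSpace X] (hX : IsUltra X)
    {r : ℝ≥0∞} (hr : 0 < r) : Equivalence fun a b : X => edist a b < r where
  refl a := by simpa using hr
  symm h := by rwa [edist_comm]
  trans {a b c} hab hbc :=
    calc edist a c = ENNReal.ofReal (dist a c) := edist_dist a c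
      _ ≤ ENNReal.ofReal (max (dist a b) (dist b c)) := ENNReal.ofReal_le_ofReal (hX a c b)
      _ = max (edist a b) (edist b c) := by rw [ENNReal.ofReal_max, ← edist_dist, ← edist_dist]
      _ < r := max_lt hab hbc

/-- A presentation `∨ᵢ αᵢ ⊙ δ_{xᵢ}`; different presentations may define the same measure. -/
structure IdemRep (X : Type*) where
  n : ℕ
  x : Fin (n + 1) → X
  α : Fin (n + 1) → EReal
  le_zero : ∀ i, α i ≤ 0
  exists_eq_zero : ∃ i, α i = 0

namespace IdemRep

variable {X : Type*}

def idem (R : IdemRep X) : (X → ℝ) → ℝ := idemOf R.x R.α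

def mm (R : IdemRep X) : (X → ℝ) → ℝ := mmOf R.x fun i => lam (R.α i)

lemma idem_agree_iff_mm_agree {E : X → X → Prop} (hE : Equivalence E) (R S : IdemRep X) :
    (∀ φ : X → ℝ, (∀ a b, E a b → φ a = φ b) → R.idem φ = S.idem φ) ↔
      ∀ φ : X → ℝ, (∀ a b, E a b → φ a = φ b) → R.mm φ = S.mm φ :=
  (IsWeighting.add.weightedSup_agree_iff hE R.le_zero S.le_zero R.exists_eq_zero
    S.exists_eq_zero).trans
    (IsWeighting.minLam.weightedSup_agree_iff hE R.le_zero S.le_zero R.exists_eq_zero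
      S.exists_eq_zero).symm

lemma idem_eq_iff_mm_eq (R S : IdemRep X) : R.idem = S.idem ↔ R.mm = S.mm := by
  simpa [funext_iff] using idem_agree_iff_mm_agree (E := Eq) eq_equivalence R S

lemma isIdem_iff {μ : (X → ℝ) → ℝ} : IsIdem μ ↔ μ ∈ range (idem (X := X)) := by
  constructor
  · rintro ⟨n, x, α, -, hα, hα₀, rfl⟩
    exact ⟨⟨n, x, α, hα, hα₀⟩, rfl⟩
  · rintro ⟨R, rfl⟩
    exact ⟨R.n, R.x, R.α, fun _ => mem_univ _, R.le_zero, R.exists_eq_zero, rfl⟩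

lemma isMM_iff {μ : (X → ℝ) → ℝ} : IsMM μ ↔ μ ∈ range (mm (X := X)) := by
  constructor
  · rintro ⟨n, x, γ, -, ⟨i₀, hi₀⟩, rfl⟩
    choose α hα hlam using fun i => lam_surjOn (mem_univ (γ i))
    refine ⟨⟨n, x, α, hα, i₀, ?_⟩, ?_⟩
    · exact lam_strictMonoOn.injOn (hα i₀) (mem_Iic.2 le_rfl) (by rw [hlam, hi₀, lam_zero])
    · simp only [mm, hlam]
  · rintro ⟨R, rfl⟩
    obtain ⟨i₀, hi₀⟩ := R.exists_eq_zero
    exact ⟨R.n, R.x, _, fun _ => mem_univ _, ⟨i₀, by simp only [hi₀, lam_zero]⟩, rfl⟩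

lemma dHatE_mm [MetricSpace X] (hX : IsUltra X) (R S : IdemRep X) :
    dHatE (eD X) R.mm S.mm = dHatE (eD X) R.idem S.idem := by
  unfold dHatE
  congr 1
  ext r
  exact and_congr_right fun hr => (idem_agree_iff_mm_agree (hX.equivalence_edist_lt hr) R S).symm

end IdemRep

def idemToMM {X : Type*} (μ : (X → ℝ) → ℝ) : (X → ℝ) → ℝ :=
  if h : ∃ R : IdemRep X, R.idem = μ then h.choose.mm else μ

lemma idemToMM_idem {X : Type*} (R : IdemRep X) : idemToMM R.idem = R.mm := by
  have h : ∃ S : IdemRep X, S.idem = R.idem := ⟨R, rfl⟩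
  rw [idemToMM, dif_pos h]
  exact (IdemRep.idem_eq_iff_mm_eq _ _).1 h.choose_spec

/-- The map `h_X : I_ω(X) → J_ω(X)`,
`h_X(∨ᵢ αᵢ ⊙ δ_{xᵢ}) = ∨ᵢ λ(αᵢ) ∧ δ_{xᵢ}`, is a well-defined bijection and an
isometry; in particular `(I_ω(X), d̂)` and `(J_ω(X), d̂)` are isometric. -/
theorem Iomega_isometric_Jomega {X : Type*} [MetricSpace X] (hX : IsUltra X) :
    ∃ h : ((X → ℝ) → ℝ) → ((X → ℝ) → ℝ),
      (∀ (n : ℕ) (x : Fin (n + 1) → X) (α : Fin (n + 1) → EReal),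
          (∀ i, α i ≤ 0) → (∃ i, α i = 0) →
          h (idemOf x α) = mmOf x (fun i => lam (α i))) ∧
      Set.BijOn h {μ | IsIdem μ} {μ | IsMM μ} ∧
      (∀ μ ν, IsIdem μ → IsIdem ν →
        dHatE (eD X) (h μ) (h ν) = dHatE (eD X) μ ν) := by
  refine ⟨idemToMM, fun n x α hα hα₀ => idemToMM_idem ⟨n, x, α, hα, hα₀⟩, ?_, ?_⟩
  · simp only [IdemRep.isIdem_iff, IdemRep.isMM_iff, ofPred_mem_eq]
    refine ⟨?_, ?_, ?_⟩
    · rintro _ ⟨R, rfl⟩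
      exact ⟨R, (idemToMM_idem R).symm⟩
    · rintro _ ⟨R, rfl⟩ _ ⟨S, rfl⟩ h
      rw [idemToMM_idem, idemToMM_idem] at h
      exact (IdemRep.idem_eq_iff_mm_eq R S).2 h
    · rintro _ ⟨R, rfl⟩
      exact ⟨R.idem, mem_range_self R, idemToMM_idem R⟩
  · intro μ ν hμ hν
    obtain ⟨R, rfl⟩ := IdemRep.isIdem_iff.1 hμ
    obtain ⟨S, rfl⟩ := IdemRep.isIdem_iff.1 hν
    rw [idemToMM_idem, idemToMM_idem]
    exact IdemRep.dHatE_mm hX R S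
end
end

section
/- Let (X,d) be an ultrametric space, let r > 0, and let μ = ∨_i α_i ⊙ δ_{x_i} and ν = ∨_j β_j ⊙ δ_{y_j} be idempotent measures of finite support on X with d̂(μ,ν) < r. Then for every x ∈ X, max{α_i : d(x_i, x) < r} = max{β_j : d(y_j, x) < r}, where the maximum over the empty set is −∞. -/
/-
Test both measures on `φ = c · 1_{B(z,r)}` for a large constant `c`. In an ultrametric space
every point of an open ball is a centre of it, so `φ` is constant on every open `r`-ball, hence
on every `t`-ball with `t < r`; as `d̂(μ,ν) < r` there is such a `t` with `μ φ = ν φ`.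
If `A` and `B` are the largest coefficients of `μ` inside and outside `B(z,r)`, then
`μ φ = max (A + c) B`, which for large `c` is `A + c ≥ 1` when `A > -∞` and `B ≤ 0` when
`A = -∞`. Comparing with the same expression for `ν` forces the two maxima over the ball to agree.
-/

open scoped ENNReal

noncomputable section

lemma IsUltra.mem_ball_iff_of_dist_lt {X : Type*} [MetricSpace X] (hX : IsUltra X)
    {w w' z : X} {r : ℝ} (h : dist w w' < r) :
    w ∈ Metric.ball z r ↔ w' ∈ Metric.ball z r := by
  simp only [Metric.mem_ball]
  exact ⟨fun hw => (hX w' z w).trans_lt (max_lt (by rwa [dist_comm]) hw),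
    fun hw' => (hX w z w').trans_lt (max_lt h hw')⟩

lemma IsUltra.frE_indicator_ball {X : Type*} [MetricSpace X] (hX : IsUltra X) {t : ℝ≥0∞}
    {r : ℝ} (ht : t ≤ ENNReal.ofReal r) (z : X) (c : ℝ) :
    FrE (eD X) t ((Metric.ball z r).indicator fun _ => c) := fun _ _ hww' =>
  Set.indicator_const_eq_indicator_const
    (hX.mem_ball_iff_of_dist_lt (edist_lt_ofReal.mp (hww'.trans_le ht)))

namespace EReal

lemma iSup_add_coe {ι : Sort*} (f : ι → EReal) (c : ℝ) :
    (⨆ i, f i) + c = ⨆ i, (f i + c) := by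
  refine le_antisymm ?_ (iSup_le fun i => add_le_add_left (le_iSup f i) _)
  rw [← le_sub_iff_add_le (by simp) (by simp)]
  exact iSup_le fun i =>
    (le_sub_iff_add_le (by simp) (by simp)).mpr (le_iSup (fun i => f i + c) i)

lemma toReal_max_add_coe {A B : EReal} (hA : A ≤ 0) (hB : B ≤ 0) {c : ℝ}
    (hc : -A.toReal ≤ c) :
    (max (A + c) B).toReal = if A = ⊥ then B.toReal else A.toReal + c := by
  split_ifs with hbot
  · simp [hbot]
  · have hAc : A + c = ((A.toReal + c : ℝ) : EReal) := by
      rw [coe_add, coe_toReal (hA.trans_lt zero_lt_top).ne hbot]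
    have hB_le : B ≤ A + c := by
      rw [hAc]
      exact hB.trans (EReal.coe_nonneg.mpr (by linarith))
    rw [max_eq_left hB_le, hAc, toReal_coe]

lemma eq_of_toReal_max_add_coe_eq {A A' B B' : EReal} (hA : A ≤ 0) (hA' : A' ≤ 0)
    (hB : B ≤ 0) (hB' : B' ≤ 0)
    (h : (max (A + ((1 - A.toReal - A'.toReal : ℝ) : EReal)) B).toReal =
      (max (A' + ((1 - A.toReal - A'.toReal : ℝ) : EReal)) B').toReal) :
    A = A' := by
  have hAr := toReal_nonpos hA
  have hA'r := toReal_nonpos hA'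
  have hBr := toReal_nonpos hB
  have hB'r := toReal_nonpos hB'
  rw [toReal_max_add_coe hA hB (by linarith), toReal_max_add_coe hA' hB' (by linarith)] at h
  by_cases hbot : A = ⊥ <;> by_cases hbot' : A' = ⊥ <;> simp only [hbot, hbot', if_true,
    if_false, toReal_bot] at h
  · rw [hbot, hbot']
  · linarith
  · linarith
  · exact (toReal_eq_toReal (hA.trans_lt zero_lt_top).ne hbot
      (hA'.trans_lt zero_lt_top).ne hbot').mp (by linarith)

end EReal

lemma idemOf_indicator {A : Type*} {n : ℕ} (x : Fin (n + 1) → A) (α : Fin (n + 1) → EReal)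
    (S : Set A) (c : ℝ) :
    idemOf x α (S.indicator fun _ => c) =
      (max ((⨆ i, ⨆ (_ : x i ∈ S), α i) + c) (⨆ i, ⨆ (_ : x i ∉ S), α i)).toReal := by
  rw [idemOf, iSup_split _ (fun i => x i ∈ S)]
  simp only [EReal.iSup_add_coe]
  congr 3 with i
  · exact iSup_congr fun hi => by rw [Set.indicator_of_mem hi]
  · exact iSup_congr fun hi => by rw [Set.indicator_of_notMem hi, EReal.coe_zero, add_zero]

theorem coefficients_over_balls_eq_general {X : Type*} [MetricSpace X] (hX : IsUltra X)
    {r : ℝ} {n m : ℕ}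
    (x : Fin (n + 1) → X) (α : Fin (n + 1) → EReal)
    (y : Fin (m + 1) → X) (β : Fin (m + 1) → EReal)
    (hα : ∀ i, α i ≤ 0)
    (hβ : ∀ j, β j ≤ 0)
    (hd : dHatE (eD X) (idemOf x α) (idemOf y β) < ENNReal.ofReal r)
    (z : X) :
    (⨆ i, ⨆ (_ : dist (x i) z < r), α i) =
      ⨆ j, ⨆ (_ : dist (y j) z < r), β j := by
  obtain ⟨t, ⟨-, hμν⟩, htr⟩ := sInf_lt_iff.mp hd
  set A := ⨆ i, ⨆ (_ : dist (x i) z < r), α i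
  set A' := ⨆ j, ⨆ (_ : dist (y j) z < r), β j
  have key := hμν _ (hX.frE_indicator_ball htr.le z (1 - A.toReal - A'.toReal))
  rw [idemOf_indicator, idemOf_indicator] at key
  exact EReal.eq_of_toReal_max_add_coe_eq (iSup₂_le fun i _ => hα i)
    (iSup₂_le fun j _ => hβ j) (iSup₂_le fun i _ => hα i) (iSup₂_le fun j _ => hβ j) key

/-- Let `μ = ∨ᵢ αᵢ ⊙ δ_{xᵢ}` and `ν = ∨ⱼ βⱼ ⊙ δ_{yⱼ}` be
idempotent measures of finite support on an ultrametric space `X` with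
`d̂(μ,ν) < r`.  Then for every `x ∈ X`,
`max {αᵢ ∣ d(xᵢ,x) < r} = max {βⱼ ∣ d(yⱼ,x) < r}`
(the maximum over the empty set being `-∞`). -/
theorem coefficients_over_balls_eq {X : Type*} [MetricSpace X] (hX : IsUltra X)
    {r : ℝ} (hr : 0 < r) {n m : ℕ}
    (x : Fin (n + 1) → X) (α : Fin (n + 1) → EReal)
    (y : Fin (m + 1) → X) (β : Fin (m + 1) → EReal)
    (hα : ∀ i, α i ≤ 0) (hα0 : ∃ i, α i = 0)
    (hβ : ∀ j, β j ≤ 0) (hβ0 : ∃ j, β j = 0)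
    (hd : dHatE (eD X) (idemOf x α) (idemOf y β) < ENNReal.ofReal r)
    (z : X) :
    (⨆ i, ⨆ (_ : dist (x i) z < r), α i) =
      ⨆ j, ⨆ (_ : dist (y j) z < r), β j :=
  coefficients_over_balls_eq_general hX x α y β hα hβ hd z

end
end

section
/- Let α : [−∞,0] → [−∞,+∞] be an order-preserving bijection, and for each ultrametric space X define g^α_X : I_ω(X) → J_ω(X) by g^α_X(∨_i t_i ⊙ δ_{x_i}) = ∨_i α(t_i) ∧ δ_{x_i}. Then each g^α_X is a well-defined bijective isometry, and for every nonexpanding map f : X → Y between ultrametric spaces one has J_ω(f) ∘ g^α_X = g^α_Y ∘ I_ω(f); thus the maps g^α_X determine an isomorphism of the functors I_ω and J_ω. -/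
open scoped ENNReal

noncomputable section

/-!
Both kinds of measures are determined by their point weights `p ↦ sup {αᵢ ∣ xᵢ = p}`: a real
`t` lies below the weight at `p` iff it lies below the value of the measure at a two-valued test
function separating `p` from the other points. As `a` is an order isomorphism
`[-∞,0] ≃ [-∞,+∞]`, it commutes with these finite suprema, so two idempotent measures agree iff
their images under `g^a` agree; hence `g^a` is well defined and injective. Naturality holds for
every map, and agreeing on `𝓕_r` means agreeing after pushing forward to the quotient by
`d(x, y) < r`, so injectivity and naturality together show that `g^a` preserves `d̂`.
-/

lemma EReal.eq_of_forall_coe_lt_iff {u v : EReal} (h : ∀ t : ℝ, (t : EReal) < u ↔ (t : EReal) < v) :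
    u = v := by
  refine eq_of_forall_lt_iff fun c => ⟨fun hc => ?_, fun hc => ?_⟩
  · obtain ⟨t, hct, htu⟩ := EReal.exists_between_coe_real hc
    exact hct.trans ((h t).mp htu)
  · obtain ⟨t, hct, htv⟩ := EReal.exists_between_coe_real hc
    exact hct.trans ((h t).mpr htv)

lemma EReal.toReal_comp_eq_iff {B : Type*} {f g : B → EReal} (hf : ∀ b, f b ≠ ⊤)
    (hf' : ∀ b, f b ≠ ⊥) (hg : ∀ b, g b ≠ ⊤) (hg' : ∀ b, g b ≠ ⊥) :
    (fun b => (f b).toReal) = (fun b => (g b).toReal) ↔ f = g := by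
  refine ⟨fun h => funext fun b => ?_, fun h => h ▸ rfl⟩
  exact (EReal.toReal_eq_toReal (hf b) (hf' b) (hg b) (hg' b)).mp (congrFun h b)

section PointWeight

variable {A : Type*} {n m : ℕ}

def idemOfE (x : Fin (n + 1) → A) (α : Fin (n + 1) → EReal) (φ : A → ℝ) : EReal :=
  ⨆ i, α i + (φ (x i) : EReal)

def mmOfE (x : Fin (n + 1) → A) (α : Fin (n + 1) → EReal) (φ : A → ℝ) : EReal :=
  ⨆ i, min (α i) (φ (x i) : EReal)

def pointWeight (x : Fin (n + 1) → A) (α : Fin (n + 1) → EReal) (p : A) : EReal :=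
  ⨆ (i) (_ : x i = p), α i

variable {x : Fin (n + 1) → A} {x' : Fin (m + 1) → A}
  {α : Fin (n + 1) → EReal} {α' : Fin (m + 1) → EReal}

lemma lt_pointWeight_iff {t : EReal} {p : A} :
    t < pointWeight x α p ↔ ∃ i, x i = p ∧ t < α i := by
  simp only [pointWeight, lt_iSup_iff, exists_prop]

lemma pointWeight_nonpos (hα : ∀ i, α i ≤ 0) (p : A) : pointWeight x α p ≤ 0 :=
  iSup₂_le fun i _ => hα i

lemma coe_lt_idemOfE_iff (φ : A → ℝ) (t : ℝ) :
    (t : EReal) < idemOfE x α φ ↔ ∃ p, ((t - φ p : ℝ) : EReal) < pointWeight x α p := by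
  have shift : ∀ (u : EReal) (s : ℝ), (t : EReal) < u + s ↔ ((t - s : ℝ) : EReal) < u :=
    fun u s => by
      rw [EReal.coe_sub, EReal.sub_lt_iff (.inl (EReal.coe_ne_bot s)) (.inl (EReal.coe_ne_top s))]
  simp only [idemOfE, lt_iSup_iff, lt_pointWeight_iff, shift]
  exact ⟨fun ⟨i, hi⟩ => ⟨x i, i, rfl, hi⟩, fun ⟨_, i, hi, ht⟩ => ⟨i, hi ▸ ht⟩⟩

lemma coe_lt_mmOfE_iff (φ : A → ℝ) (t : ℝ) :
    (t : EReal) < mmOfE x α φ ↔ ∃ p, t < φ p ∧ (t : EReal) < pointWeight x α p := by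
  simp only [mmOfE, lt_iSup_iff, lt_min_iff, EReal.coe_lt_coe_iff, lt_pointWeight_iff]
  exact ⟨fun ⟨i, hα, hφ⟩ => ⟨x i, hφ, i, rfl, hα⟩, fun ⟨_, hφ, i, hi, hα⟩ => ⟨i, hα, hi ▸ hφ⟩⟩

open Classical in
lemma coe_lt_pointWeight_iff_idemOfE (hα : ∀ i, α i ≤ 0) (p : A) (t : ℝ) :
    (t : EReal) < pointWeight x α p ↔
      (t : EReal) < idemOfE x α (fun q => if q = p then 0 else t - 1) := by
  rw [coe_lt_idemOfE_iff]
  refine ⟨fun h => ⟨p, by simpa using h⟩, fun ⟨q, hq⟩ => ?_⟩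
  by_cases hqp : q = p
  · subst hqp
    simpa using hq
  · have : (1 : EReal) < 0 := by
      simpa [hqp] using hq.trans_le (pointWeight_nonpos hα q)
    exact absurd this (by norm_num)

open Classical in
lemma coe_lt_pointWeight_iff_mmOfE (p : A) (t : ℝ) :
    (t : EReal) < pointWeight x α p ↔
      (t : EReal) < mmOfE x α (fun q => if q = p then t + 1 else t) := by
  rw [coe_lt_mmOfE_iff]
  refine ⟨fun h => ⟨p, by simp, h⟩, fun ⟨q, hq, hw⟩ => ?_⟩
  by_cases hqp : q = p
  · exact hqp ▸ hw
  · simp [hqp] at hq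

lemma idemOfE_eq_iff (hα : ∀ i, α i ≤ 0) (hα' : ∀ i, α' i ≤ 0) :
    idemOfE x α = idemOfE x' α' ↔ pointWeight x α = pointWeight x' α' := by
  refine ⟨fun h => funext fun p => EReal.eq_of_forall_coe_lt_iff fun t => ?_,
    fun h => funext fun φ => EReal.eq_of_forall_coe_lt_iff fun t => ?_⟩
  · rw [coe_lt_pointWeight_iff_idemOfE hα, coe_lt_pointWeight_iff_idemOfE hα', h]
  · simp only [coe_lt_idemOfE_iff, h]

lemma mmOfE_eq_iff : mmOfE x α = mmOfE x' α' ↔ pointWeight x α = pointWeight x' α' := by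
  refine ⟨fun h => funext fun p => EReal.eq_of_forall_coe_lt_iff fun t => ?_,
    fun h => funext fun φ => EReal.eq_of_forall_coe_lt_iff fun t => ?_⟩
  · rw [coe_lt_pointWeight_iff_mmOfE, coe_lt_pointWeight_iff_mmOfE, h]
  · simp only [coe_lt_mmOfE_iff, h]

lemma idemOfE_ne_top (hα : ∀ i, α i ≤ 0) (φ : A → ℝ) : idemOfE x α φ ≠ ⊤ :=
  iSup_ne_top fun i => (EReal.add_lt_top (ne_top_of_le_ne_top EReal.zero_ne_top (hα i))
    (EReal.coe_ne_top _)).ne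

lemma idemOfE_ne_bot (hα0 : ∃ i, α i = 0) (φ : A → ℝ) : idemOfE x α φ ≠ ⊥ := by
  obtain ⟨i, hi⟩ := hα0
  refine ne_bot_of_le_ne_bot (EReal.coe_ne_bot (φ (x i))) ?_
  simpa [idemOfE, hi] using le_iSup (fun i => α i + (φ (x i) : EReal)) i

lemma mmOfE_ne_top (φ : A → ℝ) : mmOfE x α φ ≠ ⊤ :=
  iSup_ne_top fun _ => ne_top_of_le_ne_top (EReal.coe_ne_top _) (min_le_right _ _)

lemma mmOfE_ne_bot (hα : ∃ i, α i = ⊤) (φ : A → ℝ) : mmOfE x α φ ≠ ⊥ := by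
  obtain ⟨i, hi⟩ := hα
  refine ne_bot_of_le_ne_bot (EReal.coe_ne_bot (φ (x i))) ?_
  simpa [mmOfE, hi] using le_iSup (fun i => min (α i) (φ (x i) : EReal)) i

lemma idemOf_eq_iff (hα : ∀ i, α i ≤ 0) (hα0 : ∃ i, α i = 0)
    (hα' : ∀ i, α' i ≤ 0) (hα0' : ∃ i, α' i = 0) :
    idemOf x α = idemOf x' α' ↔ pointWeight x α = pointWeight x' α' :=
  (EReal.toReal_comp_eq_iff (idemOfE_ne_top hα) (idemOfE_ne_bot hα0) (idemOfE_ne_top hα')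
    (idemOfE_ne_bot hα0')).trans (idemOfE_eq_iff hα hα')

lemma mmOf_eq_iff (hα : ∃ i, α i = ⊤) (hα' : ∃ i, α' i = ⊤) :
    mmOf x α = mmOf x' α' ↔ pointWeight x α = pointWeight x' α' :=
  (EReal.toReal_comp_eq_iff mmOfE_ne_top (mmOfE_ne_bot hα) mmOfE_ne_top
    (mmOfE_ne_bot hα')).trans mmOfE_eq_iff

end PointWeight

section OrderIso

variable {a : EReal → EReal} (hmono : MonotoneOn a (Set.Iic 0))
  (habij : Set.BijOn a (Set.Iic 0) Set.univ)
include hmono habij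

lemma apply_zero_eq_top : a 0 = ⊤ := by
  obtain ⟨u, hu, hau⟩ := habij.surjOn (Set.mem_univ ⊤)
  exact top_le_iff.mp (hau ▸ hmono hu Set.self_mem_Iic hu)

variable {A : Type*} {n m : ℕ} {x : Fin (n + 1) → A} {x' : Fin (m + 1) → A}
  {α : Fin (n + 1) → EReal} {α' : Fin (m + 1) → EReal}

lemma pointWeight_comp (hα : ∀ i, α i ≤ 0) :
    pointWeight x (fun i => a (α i)) = fun p => a (pointWeight x α p) := by
  have hstrict := hmono.strictMonoOn_of_injOn habij.injOn
  funext p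
  refine eq_of_forall_lt_iff fun s => ?_
  obtain ⟨u, hu, rfl⟩ := habij.surjOn (Set.mem_univ s)
  rw [lt_pointWeight_iff, hstrict.lt_iff_lt hu (pointWeight_nonpos hα p), lt_pointWeight_iff]
  exact exists_congr fun i => and_congr_right fun _ => hstrict.lt_iff_lt hu (hα i)

lemma idemOf_eq_iff_mmOf_eq (hα : ∀ i, α i ≤ 0) (hα0 : ∃ i, α i = 0)
    (hα' : ∀ i, α' i ≤ 0) (hα0' : ∃ i, α' i = 0) :
    idemOf x α = idemOf x' α' ↔
      mmOf x (fun i => a (α i)) = mmOf x' (fun i => a (α' i)) := by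
  have top_of_zero : ∀ {k} {β : Fin (k + 1) → EReal}, (∃ i, β i = 0) → ∃ i, a (β i) = ⊤ :=
    fun ⟨i, hi⟩ => ⟨i, hi ▸ apply_zero_eq_top hmono habij⟩
  rw [idemOf_eq_iff hα hα0 hα' hα0', mmOf_eq_iff (top_of_zero hα0) (top_of_zero hα0'),
    pointWeight_comp hmono habij hα, pointWeight_comp hmono habij hα']
  refine ⟨fun h => h ▸ rfl, fun h => funext fun p => ?_⟩
  exact habij.injOn (pointWeight_nonpos hα p) (pointWeight_nonpos hα' p) (congrFun h p)

end OrderIso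

section IdemToMaxMin

variable {A B : Type*}

def IsIdemToMaxMinPair (a : EReal → EReal) (μ ν : (A → ℝ) → ℝ) : Prop :=
  ∃ (n : ℕ) (x : Fin (n + 1) → A) (α : Fin (n + 1) → EReal),
    (∀ i, α i ≤ 0) ∧ (∃ i, α i = 0) ∧ μ = idemOf x α ∧ ν = mmOf x fun i => a (α i)

/-- The map `g^a`; its value outside `I_ω` is unspecified. -/
def idemToMaxMin (a : EReal → EReal) (μ : (A → ℝ) → ℝ) : (A → ℝ) → ℝ :=
  Classical.epsilon (IsIdemToMaxMinPair a μ)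

lemma isIdem_idemOf {n : ℕ} {x : Fin (n + 1) → A} {α : Fin (n + 1) → EReal}
    (hα : ∀ i, α i ≤ 0) (hα0 : ∃ i, α i = 0) : IsIdem (idemOf x α) :=
  ⟨n, x, α, fun _ => Set.mem_univ _, hα, hα0, rfl⟩

lemma IsIdem.jmap {μ : (A → ℝ) → ℝ} (hμ : IsIdem μ) (f : A → B) : IsIdem (Jmap f μ) := by
  obtain ⟨n, x, α, -, hα, hα0, rfl⟩ := hμ
  exact isIdem_idemOf (x := f ∘ x) hα hα0

lemma forall_FrE_eq_iff (e : A → A → ℝ≥0∞) (r : ℝ≥0∞) (μ ν : (A → ℝ) → ℝ) :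
    (∀ φ, FrE e r φ → μ φ = ν φ) ↔
      Jmap (Quot.mk fun x y => e x y < r) μ = Jmap (Quot.mk fun x y => e x y < r) ν :=
  ⟨fun h => funext fun ψ => h _ fun _ _ hxy => congrArg ψ (Quot.sound hxy),
    fun h φ hφ => congrFun h (Quot.lift φ hφ)⟩

variable {a : EReal → EReal} (hmono : MonotoneOn a (Set.Iic 0))
  (habij : Set.BijOn a (Set.Iic 0) Set.univ)
include hmono habij

lemma idemToMaxMin_idemOf {n : ℕ} {x : Fin (n + 1) → A} {α : Fin (n + 1) → EReal}
    (hα : ∀ i, α i ≤ 0) (hα0 : ∃ i, α i = 0) :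
    idemToMaxMin a (idemOf x α) = mmOf x fun i => a (α i) := by
  obtain ⟨m, y, γ, hγ, hγ0, hrep, hval⟩ :=
    Classical.epsilon_spec (p := IsIdemToMaxMinPair a (idemOf x α)) ⟨_, n, x, α, hα, hα0, rfl, rfl⟩
  rw [idemToMaxMin, hval]
  exact (idemOf_eq_iff_mmOf_eq hmono habij hγ hγ0 hα hα0).mp hrep.symm

lemma idemToMaxMin_bijOn :
    Set.BijOn (idemToMaxMin (A := A) a) {μ | IsIdem μ} {μ | IsMM μ} := by
  refine ⟨?mapsTo, ?injOn, ?surjOn⟩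
  case mapsTo =>
    rintro μ ⟨n, x, α, -, hα, ⟨i, hi⟩, rfl⟩
    show IsMM _
    rw [idemToMaxMin_idemOf hmono habij hα ⟨i, hi⟩]
    exact ⟨n, x, _, fun _ => Set.mem_univ _, ⟨i, hi ▸ apply_zero_eq_top hmono habij⟩, rfl⟩
  case injOn =>
    rintro μ ⟨n, x, α, -, hα, hα0, rfl⟩ ν ⟨m, y, γ, -, hγ, hγ0, rfl⟩ h
    rw [idemToMaxMin_idemOf hmono habij hα hα0, idemToMaxMin_idemOf hmono habij hγ hγ0] at h
    exact (idemOf_eq_iff_mmOf_eq hmono habij hα hα0 hγ hγ0).mpr h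
  case surjOn =>
    rintro ν ⟨n, y, β, -, ⟨iT, hiT⟩, rfl⟩
    choose u hu hau using fun i => habij.surjOn (Set.mem_univ (β i))
    have hu0 : u iT = 0 :=
      habij.injOn (hu iT) Set.self_mem_Iic <| by rw [hau, hiT, apply_zero_eq_top hmono habij]
    refine ⟨idemOf y u, isIdem_idemOf hu ⟨iT, hu0⟩, ?_⟩
    rw [idemToMaxMin_idemOf hmono habij hu ⟨iT, hu0⟩]
    exact congrArg (mmOf y) (funext hau)

lemma jmap_idemToMaxMin {μ : (A → ℝ) → ℝ} (hμ : IsIdem μ) (f : A → B) :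
    Jmap f (idemToMaxMin a μ) = idemToMaxMin a (Jmap f μ) := by
  obtain ⟨n, x, α, -, hα, hα0, rfl⟩ := hμ
  rw [idemToMaxMin_idemOf hmono habij hα hα0]
  exact (idemToMaxMin_idemOf (x := f ∘ x) hmono habij hα hα0).symm

lemma dHatE_idemToMaxMin (e : A → A → ℝ≥0∞) {μ ν : (A → ℝ) → ℝ} (hμ : IsIdem μ) (hν : IsIdem ν) :
    dHatE e (idemToMaxMin a μ) (idemToMaxMin a ν) = dHatE e μ ν := by
  unfold dHatE
  congr 1
  ext r
  refine and_congr_right fun _ => ?_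
  rw [forall_FrE_eq_iff, forall_FrE_eq_iff, jmap_idemToMaxMin hmono habij hμ,
    jmap_idemToMaxMin hmono habij hν]
  exact (idemToMaxMin_bijOn hmono habij).injOn.eq_iff (hμ.jmap _) (hν.jmap _)

end IdemToMaxMin

theorem galpha_functor_iso_general {X Y : Type*} [MetricSpace X] [MetricSpace Y]
    (a : EReal → EReal) (hmono : MonotoneOn a {t : EReal | t ≤ 0})
    (habij : Set.BijOn a {t : EReal | t ≤ 0} Set.univ)
    (f : X → Y) :
    ∃ (gX : ((X → ℝ) → ℝ) → ((X → ℝ) → ℝ))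
      (gY : ((Y → ℝ) → ℝ) → ((Y → ℝ) → ℝ)),
      (∀ (n : ℕ) (x : Fin (n + 1) → X) (α : Fin (n + 1) → EReal),
          (∀ i, α i ≤ 0) → (∃ i, α i = 0) →
          gX (idemOf x α) = mmOf x (fun i => a (α i))) ∧
      (∀ (n : ℕ) (y : Fin (n + 1) → Y) (α : Fin (n + 1) → EReal),
          (∀ i, α i ≤ 0) → (∃ i, α i = 0) →
          gY (idemOf y α) = mmOf y (fun i => a (α i))) ∧
      Set.BijOn gX {μ | IsIdem μ} {μ | IsMM μ} ∧
      Set.BijOn gY {μ | IsIdem μ} {μ | IsMM μ} ∧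
      (∀ μ ν, IsIdem μ → IsIdem ν →
        dHatE (eD X) (gX μ) (gX ν) = dHatE (eD X) μ ν) ∧
      (∀ μ ν, IsIdem μ → IsIdem ν →
        dHatE (eD Y) (gY μ) (gY ν) = dHatE (eD Y) μ ν) ∧
      (∀ μ, IsIdem μ → Jmap f (gX μ) = gY (Jmap f μ)) :=
  ⟨idemToMaxMin a, idemToMaxMin a,
    fun _ _ _ => idemToMaxMin_idemOf hmono habij,
    fun _ _ _ => idemToMaxMin_idemOf hmono habij,
    idemToMaxMin_bijOn hmono habij, idemToMaxMin_bijOn hmono habij,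
    fun _ _ => dHatE_idemToMaxMin hmono habij _,
    fun _ _ => dHatE_idemToMaxMin hmono habij _,
    fun _ hμ => jmap_idemToMaxMin hmono habij hμ f⟩

/-- For an order-preserving bijection
`a : [-∞,0] → [-∞,+∞]`, the maps `g^a_X : I_ω(X) → J_ω(X)`,
`g^a_X(∨ᵢ tᵢ ⊙ δ_{xᵢ}) = ∨ᵢ a(tᵢ) ∧ δ_{xᵢ}`, are well-defined bijective
isometries and commute with the pushforwards along every nonexpanding map
`f : X → Y`; thus they determine an isomorphism of the functors `I_ω` and
`J_ω`. -/
theorem galpha_functor_iso {X Y : Type*} [MetricSpace X] [MetricSpace Y]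
    (hX : IsUltra X) (hY : IsUltra Y)
    (a : EReal → EReal) (hmono : MonotoneOn a {t : EReal | t ≤ 0})
    (habij : Set.BijOn a {t : EReal | t ≤ 0} Set.univ)
    (f : X → Y) (hf : ∀ p q : X, dist (f p) (f q) ≤ dist p q) :
    ∃ (gX : ((X → ℝ) → ℝ) → ((X → ℝ) → ℝ))
      (gY : ((Y → ℝ) → ℝ) → ((Y → ℝ) → ℝ)),
      (∀ (n : ℕ) (x : Fin (n + 1) → X) (α : Fin (n + 1) → EReal),
          (∀ i, α i ≤ 0) → (∃ i, α i = 0) →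
          gX (idemOf x α) = mmOf x (fun i => a (α i))) ∧
      (∀ (n : ℕ) (y : Fin (n + 1) → Y) (α : Fin (n + 1) → EReal),
          (∀ i, α i ≤ 0) → (∃ i, α i = 0) →
          gY (idemOf y α) = mmOf y (fun i => a (α i))) ∧
      Set.BijOn gX {μ | IsIdem μ} {μ | IsMM μ} ∧
      Set.BijOn gY {μ | IsIdem μ} {μ | IsMM μ} ∧
      (∀ μ ν, IsIdem μ → IsIdem ν →
        dHatE (eD X) (gX μ) (gX ν) = dHatE (eD X) μ ν) ∧
      (∀ μ ν, IsIdem μ → IsIdem ν →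
        dHatE (eD Y) (gY μ) (gY ν) = dHatE (eD Y) μ ν) ∧
      (∀ μ, IsIdem μ → Jmap f (gX μ) = gY (Jmap f μ)) :=
  galpha_functor_iso_general a hmono habij f

end
end

section
/- For every order-preserving bijection α : [−∞,0] → [−∞,+∞] there exist a finite ultrametric space X and an element M ∈ I_ω(I_ω(X)) such that g^α_X(ζ_X(M)) ≠ ξ_X(J_ω(g^α_X)(g^α_{I_ω(X)}(M))). Concretely, one may take X = {a,b,c} with all pairwise distances equal to 1 and M = ((−1) ⊙ δ_μ) ∨ (0 ⊙ δ_ν), where μ = ((−2) ⊙ δ_a) ∨ (0 ⊙ δ_b) and ν = ((−3) ⊙ δ_b) ∨ (0 ⊙ δ_c). Consequently, no isomorphism of the functors I_ω and J_ω is compatible with the monad multiplications ζ and ξ, so the monads (I_ω, δ, ζ) and (J_ω, δ, ξ) are not isomorphic. -/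
/-!
Evaluate both sides at the test function `φ` that equals a large `r` at `pa` and a small `s`
elsewhere, with `s < v < r` for the real number `v = a (-2)` (real because `a` is strictly
increasing with `a 0 = ⊤`). On the right, `g^a(μ)` takes the value `v` at `φ`, and the outer
weight `a (-1) > v` does not cut it down, so the right side is `v`. On the left, `ζ` adds the
weights along the way to `pa`, which gets weight `-1 + (-2) = -3`, so every term of
`g^a(ζ(M))` at `φ` is at most `max (a (-3)) s < v`. Thus `min (a (-1)) (a (-2)) = a (-2)` while `a (-1 + -2) < a (-2)`:
no order isomorphism turns `+` into `min`.
-/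

open scoped ENNReal

noncomputable section

theorem iSup_fin_succ {α : Type*} [CompleteLattice α] {n : ℕ} (f : Fin (n + 1) → α) :
    ⨆ i, f i = f 0 ⊔ ⨆ i : Fin n, f i.succ :=
  le_antisymm
    (iSup_le fun i => i.cases le_sup_left fun j => le_sup_of_le_right (le_iSup (f ∘ Fin.succ) j))
    (sup_le (le_iSup f 0) (iSup_le fun j => le_iSup f j.succ))

theorem EReal.coe_ofNat (n : ℕ) [n.AtLeastTwo] : ((ofNat(n) : ℝ) : EReal) = ofNat(n) := rfl

theorem EReal.coe_max (x y : ℝ) : ((max x y : ℝ) : EReal) = max (x : EReal) y :=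
  EReal.coe_strictMono.monotone.map_max

theorem apply_zero_eq_top_of_surjOn {a : EReal → EReal} (hmono : MonotoneOn a (Set.Iic 0))
    (hsurj : Set.SurjOn a (Set.Iic 0) Set.univ) : a 0 = ⊤ := by
  obtain ⟨t, ht, hat⟩ := hsurj (Set.mem_univ ⊤)
  exact top_le_iff.mp (hat ▸ hmono ht Set.self_mem_Iic ht)

theorem exists_apply_eq_of_ne {X : Type*} {p q r : X} (hq : q ≠ p) (hr : r ≠ p) (b c : ℝ) :
    ∃ φ : X → ℝ, φ p = b ∧ φ q = c ∧ φ r = c := by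
  classical
  exact ⟨fun x => if x = p then b else c, if_pos rfl, if_neg hq, if_neg hr⟩

section FiniteSupport

variable {A : Type*}

theorem idemOf_two_apply (p q : A) (c : ℝ) (φ : A → ℝ) :
    idemOf ![p, q] ![(c : EReal), 0] φ = max (c + φ p) (φ q) := by
  simp [idemOf, iSup_fin_succ, ← EReal.coe_add, ← EReal.coe_max]

theorem idemOf_four_apply (p q r s : A) (c₁ c₂ c₃ : ℝ) (φ : A → ℝ) :
    idemOf ![p, q, r, s] ![(c₁ : EReal), (c₂ : EReal), (c₃ : EReal), 0] φ =
      max (c₁ + φ p) (max (c₂ + φ q) (max (c₃ + φ r) (φ s))) := by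
  simp [idemOf, iSup_fin_succ, ← EReal.coe_add, ← EReal.coe_max]

theorem mult_idemOf_two_two (p q r s : A) (c d e : ℝ) :
    mult (idemOf ![idemOf ![p, q] ![(c : EReal), 0], idemOf ![r, s] ![(d : EReal), 0]]
        ![(e : EReal), 0]) =
      idemOf ![p, q, r, s] ![((e + c : ℝ) : EReal), (e : EReal), (d : EReal), 0] := by
  funext φ
  simp only [mult, idemOf_two_apply, idemOf_four_apply, ← max_add_add_left, add_assoc, max_assoc]

theorem mmOf_eq_of_forall_le_of_eq {n : ℕ} {x : Fin (n + 1) → A} {α : Fin (n + 1) → EReal}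
    {φ : A → ℝ} {v : ℝ} (hle : ∀ i, min (α i) (φ (x i)) ≤ v) (j : Fin (n + 1))
    (hj : min (α j) (φ (x j)) = v) : mmOf x α φ = v := by
  have hsup : (⨆ i, min (α i) (φ (x i) : EReal)) = v :=
    le_antisymm (iSup_le hle) (hj ▸ le_iSup (fun i => min (α i) (φ (x i) : EReal)) j)
  rw [mmOf, hsup, EReal.toReal_coe]

theorem mmOf_lt_of_forall_lt {n : ℕ} {x : Fin (n + 1) → A} {α : Fin (n + 1) → EReal}
    {φ : A → ℝ} {v : ℝ} (htop : ∃ i, α i = ⊤) (hlt : ∀ i, min (α i) (φ (x i)) < v) :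
    mmOf x α φ < v := by
  set f := fun i => min (α i) (φ (x i) : EReal)
  obtain ⟨i, hi⟩ := exists_eq_ciSup_of_finite (f := f)
  obtain ⟨k, hk⟩ := htop
  have hne_bot : iSup f ≠ ⊥ :=
    ne_bot_of_le_ne_bot (EReal.coe_ne_bot (φ (x k))) (by simpa [f, hk] using le_iSup f k)
  have hsup_lt : iSup f < v := hi ▸ hlt i
  lift iSup f to ℝ using ⟨hsup_lt.ne_top, hne_bot⟩ with w hw
  rw [mmOf, ← hw, EReal.toReal_coe]
  exact_mod_cast hsup_lt

end FiniteSupport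

theorem monads_not_isomorphic_general {X : Type*} [MetricSpace X]
    (pa pb pc : X)
    (hab : dist pa pb = 1) (hac : dist pa pc = 1)
    (a : EReal → EReal) (hmono : MonotoneOn a {t : EReal | t ≤ 0})
    (habij : Set.BijOn a {t : EReal | t ≤ 0} Set.univ)
    (g1 : ((X → ℝ) → ℝ) → ((X → ℝ) → ℝ))
    (g2 : ((((X → ℝ) → ℝ) → ℝ) → ℝ) → ((((X → ℝ) → ℝ) → ℝ) → ℝ))
    (hg1 : ∀ (n : ℕ) (x : Fin (n + 1) → X) (α : Fin (n + 1) → EReal),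
        (∀ i, α i ≤ 0) → (∃ i, α i = 0) →
        g1 (idemOf x α) = mmOf x (fun i => a (α i)))
    (hg2 : ∀ (n : ℕ) (x : Fin (n + 1) → ((X → ℝ) → ℝ))
        (α : Fin (n + 1) → EReal),
        (∀ i, α i ≤ 0) → (∃ i, α i = 0) →
        g2 (idemOf x α) = mmOf x (fun i => a (α i))) :
    g1 (mult (idemOf
        ![idemOf ![pa, pb] ![(-2 : EReal), 0], idemOf ![pb, pc] ![(-3 : EReal), 0]]
        ![(-1 : EReal), 0])) ≠
      mult (Jmap g1 (g2 (idemOf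
        ![idemOf ![pa, pb] ![(-2 : EReal), 0], idemOf ![pb, pc] ![(-3 : EReal), 0]]
        ![(-1 : EReal), 0]))) := by
  have hstrict := hmono.strictMonoOn_of_injOn habij.injOn
  have ha0 : a 0 = ⊤ := apply_zero_eq_top_of_surjOn hmono habij.surjOn
  have h32 : a (-3) < a (-2) := hstrict (by simp) (by simp) (EReal.coe_strictMono (by norm_num))
  have h21 : a (-2) < a (-1) := hstrict (by simp) (by simp) (EReal.coe_strictMono (by norm_num))
  obtain ⟨v, hv⟩ : ∃ v : ℝ, (v : EReal) = a (-2) :=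
    ⟨_, EReal.coe_toReal (h21.trans_le le_top).ne h32.ne_bot⟩
  rw [← hv] at h32 h21
  obtain ⟨s, hs⟩ := exists_lt v
  obtain ⟨r, hr⟩ := exists_gt v
  obtain ⟨φ, hφa, hφb, hφc⟩ :=
    exists_apply_eq_of_ne (fun h : pb = pa => by simp [h] at hab)
      (fun h : pc = pa => by simp [h] at hac) r s
  have hζ := mult_idemOf_two_two pa pb pb pc (-2) (-3) (-1)
  norm_num only [EReal.coe_neg, EReal.coe_one, EReal.coe_ofNat] at hζ
  rw [hζ, hg1 3 _ _ (by simp [Fin.forall_fin_succ]) ⟨3, rfl⟩,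
    hg2 1 _ _ (by simp [Fin.forall_fin_succ]) ⟨1, rfl⟩]
  have hμ : g1 (idemOf ![pa, pb] ![-2, 0]) φ = v := by
    rw [hg1 1 _ _ (by simp [Fin.forall_fin_two]) ⟨1, rfl⟩]
    exact mmOf_eq_of_forall_le_of_eq (by simp [Fin.forall_fin_two, hφb, ha0, ← hv, hs.le]) 0
      (by simp [hφa, ← hv, hr.le])
  have hν : g1 (idemOf ![pb, pc] ![-3, 0]) φ = s := by
    rw [hg1 1 _ _ (by simp [Fin.forall_fin_two]) ⟨1, rfl⟩]
    exact mmOf_eq_of_forall_le_of_eq (by simp [Fin.forall_fin_two, hφb, hφc, ha0]) 1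
      (by simp [hφc, ha0])
  have hRHS : mmOf ![idemOf ![pa, pb] ![-2, 0], idemOf ![pb, pc] ![-3, 0]]
      (fun i => a (![-1, 0] i)) (fun μ => g1 μ φ) = v :=
    mmOf_eq_of_forall_le_of_eq (by simp [Fin.forall_fin_two, hμ, hν, ha0, hs.le]) 0
      (by simp [hμ, h21.le])
  have hLHS : mmOf ![pa, pb, pb, pc] (fun i => a (![-3, -1, -3, 0] i)) φ < v :=
    mmOf_lt_of_forall_lt ⟨3, by simp [ha0]⟩
      (by simp [Fin.forall_fin_succ, hφa, hφb, hφc, ha0, h32, hs])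
  exact fun h => hLHS.ne ((congrFun h φ).trans hRHS)

/-- The monads `(I_ω, δ, ζ)` and `(J_ω, δ, ξ)` are not
isomorphic: for every order-preserving bijection `a : [-∞,0] → [-∞,+∞]`,
taking an ultrametric space `X` containing three points `pa, pb, pc` with all
pairwise distances `1`, and
`M = ((-1) ⊙ δ_μ) ∨ δ_ν ∈ I_ω(I_ω(X))` with `μ = ((-2) ⊙ δ_{pa}) ∨ δ_{pb}`,
`ν = ((-3) ⊙ δ_{pb}) ∨ δ_{pc}`, one has
`g^a_X(ζ_X(M)) ≠ ξ_X(J_ω(g^a_X)(g^a_{I_ω(X)}(M)))`; hence no isomorphism of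
the functors `I_ω` and `J_ω` is compatible with the multiplications `ζ`, `ξ`. -/
theorem monads_not_isomorphic {X : Type*} [MetricSpace X] (hX : IsUltra X)
    (pa pb pc : X)
    (hab : dist pa pb = 1) (hac : dist pa pc = 1) (hbc : dist pb pc = 1)
    (a : EReal → EReal) (hmono : MonotoneOn a {t : EReal | t ≤ 0})
    (habij : Set.BijOn a {t : EReal | t ≤ 0} Set.univ)
    (g1 : ((X → ℝ) → ℝ) → ((X → ℝ) → ℝ))
    (g2 : ((((X → ℝ) → ℝ) → ℝ) → ℝ) → ((((X → ℝ) → ℝ) → ℝ) → ℝ))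
    (hg1 : ∀ (n : ℕ) (x : Fin (n + 1) → X) (α : Fin (n + 1) → EReal),
        (∀ i, α i ≤ 0) → (∃ i, α i = 0) →
        g1 (idemOf x α) = mmOf x (fun i => a (α i)))
    (hg2 : ∀ (n : ℕ) (x : Fin (n + 1) → ((X → ℝ) → ℝ))
        (α : Fin (n + 1) → EReal),
        (∀ i, α i ≤ 0) → (∃ i, α i = 0) →
        g2 (idemOf x α) = mmOf x (fun i => a (α i))) :
    g1 (mult (idemOf
        ![idemOf ![pa, pb] ![(-2 : EReal), 0], idemOf ![pb, pc] ![(-3 : EReal), 0]]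
        ![(-1 : EReal), 0])) ≠
      mult (Jmap g1 (g2 (idemOf
        ![idemOf ![pa, pb] ![(-2 : EReal), 0], idemOf ![pb, pc] ![(-3 : EReal), 0]]
        ![(-1 : EReal), 0]))) :=
  monads_not_isomorphic_general pa pb pc hab hac a hmono habij g1 g2 hg1 hg2

end
end

section
/- Let (X,d) and (Y,ρ) be ultrametric spaces. Then the map (μ,ν) ↦ μ ⊗ ν from J_ω(X) × J_ω(Y) (with the max-metric of d̂ and ρ̂) to J_ω(X × Y) (with the ultrametric induced by the max-metric on X × Y) is nonexpanding. -/
open scoped ENNReal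

noncomputable section

/-- The tensor product `μ ⊗ ν` of functionals: for max-min measures
`μ = ∨ᵢ αᵢ ∧ δ_{xᵢ}` and `ν = ∨ⱼ βⱼ ∧ δ_{yⱼ}` this is
`φ ↦ max_{i,j} min (αᵢ, βⱼ, φ(xᵢ,yⱼ))`. -/
def tensor {A B : Type*} (μ : (A → ℝ) → ℝ) (ν : (B → ℝ) → ℝ) :
    (A × B → ℝ) → ℝ :=
  fun φ => μ fun a => ν fun b => φ (a, b)

/-- For ultrametric spaces `(X,d)` and `(Y,ρ)`, the map
`(μ,ν) ↦ μ ⊗ ν : J_ω(X) × J_ω(Y) → J_ω(X × Y)` is nonexpanding (the domain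
carrying the max-metric of `d̂` and `ρ̂`, the product `X × Y` its
max-metric). -/
theorem tensor_nonexpanding {X Y : Type*} [MetricSpace X] [MetricSpace Y]
    (hX : IsUltra X) (hY : IsUltra Y)
    (μ μ' : (X → ℝ) → ℝ) (ν ν' : (Y → ℝ) → ℝ)
    (hμ : IsMM μ) (hμ' : IsMM μ') (hν : IsMM ν) (hν' : IsMM ν') :
    dHatE (eD (X × Y)) (tensor μ ν) (tensor μ' ν') ≤
      max (dHatE (eD X) μ μ') (dHatE (eD Y) ν ν') := by
  refine le_of_forall_gt_imp_ge_of_dense fun r hr => ?_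
  have h1 : dHatE (eD X) μ μ' < r := (le_max_left _ _).trans_lt hr
  have h2 : dHatE (eD Y) ν ν' < r := (le_max_right _ _).trans_lt hr
  rw [dHatE, sInf_lt_iff] at h1 h2
  obtain ⟨s, ⟨hs0, hsμ⟩, hsr⟩ := h1
  obtain ⟨t, ⟨ht0, htν⟩, htr⟩ := h2
  -- membership in F_r passes to smaller radii
  have hμr : ∀ φ : X → ℝ, FrE (eD X) r φ → μ φ = μ' φ := fun φ hφ =>
    hsμ φ fun x y hxy => hφ x y (hxy.trans hsr)
  have hνr : ∀ φ : Y → ℝ, FrE (eD Y) r φ → ν φ = ν' φ := fun φ hφ =>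
    htν φ fun x y hxy => hφ x y (hxy.trans htr)
  refine sInf_le ⟨hs0.trans hsr, fun φ hφ => ?_⟩
  have step1 : (fun a : X => ν fun b => φ (a, b)) = fun a : X => ν' fun b => φ (a, b) := by
    funext a
    refine hνr _ fun y y' hyy' => hφ (a, y) (a, y') ?_
    simp only [eD, Prod.edist_eq, edist_self, max_lt_iff]
    exact ⟨hs0.trans hsr, hyy'⟩
  have step2 : μ (fun a : X => ν' fun b => φ (a, b)) = μ' (fun a : X => ν' fun b => φ (a, b)) := by
    refine hμr _ fun x x' hxx' => ?_
    have : (fun b => φ (x, b)) = fun b => φ (x', b) := by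
      funext b
      refine hφ (x, b) (x', b) ?_
      simp only [eD, Prod.edist_eq, edist_self, max_lt_iff]
      exact ⟨hxx', hs0.trans hsr⟩
    simp [this]
  simpa [tensor, step1] using step2

end
end

section
/- Let (X,d) be an ultrametric space, n ≥ 1, and G a subgroup of the symmetric group S_n. Then the formula θ_X([μ_1,…,μ_n]) = J_ω(π_{G,X})(μ_1 ⊗ ⋯ ⊗ μ_n) gives a well-defined map θ_X : SP^n_G(J_ω(X)) → J_ω(SP^n_G(X)) (its value does not depend on the choice of orbit representative (μ_1,…,μ_n)), and θ_X is nonexpanding. -/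
open scoped ENNReal

noncomputable section

/-- The `n`-fold tensor product `μ₁ ⊗ ⋯ ⊗ μₙ ∈ J_ω(Xⁿ)`: for max-min measures
`μₖ = ∨_{iₖ} α^k_{iₖ} ∧ δ_{x^k_{iₖ}}` this is
`φ ↦ max_{i₁,…,iₙ} min (α^1_{i₁}, …, α^n_{iₙ}, φ(x^1_{i₁},…,x^n_{iₙ}))`. -/
def tensorN {X : Type*} : (n : ℕ) → (Fin n → ((X → ℝ) → ℝ)) →
    ((Fin n → X) → ℝ) → ℝ
  | 0, _, φ => φ Fin.elim0
  | n + 1, μ, φ =>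
      μ 0 fun a => tensorN n (fun i => μ i.succ) fun v => φ (Fin.cons a v)


/-! Computed in the extended reals, the tensor product of finitely supported max-min measures
`μᵢ = ∨ₖ αᵢₖ ∧ δ_{xᵢₖ}` is `φ ↦ ⨆ⱼ min (⨅ᵢ αᵢⱼᵢ) (φ (xᵢⱼᵢ)ᵢ)`, a supremum over multi-indices `j`.
Permuting the factors only reindexes this supremum, so the pushforward along the orbit map
does not see the permutation. For nonexpansion: if `μᵢ` and `ν_{σ i}` agree on `𝓕_r` for all `i`,
unfolding the iterated tensor product one factor at a time shows that `⊗ μᵢ` and `⊗ ν_{σ i}`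
agree on every function constant on `r`-balls of the max-metric, and `φ ∘ π` is such a function
for `φ ∈ 𝓕_r(SPⁿ_G X)` because `d̃([x],[y]) ≤ maxᵢ d(xᵢ, yᵢ)`. -/

theorem iInf_fin_succ {α : Type*} [CompleteLattice α] {n : ℕ} (f : Fin (n + 1) → α) :
    ⨅ i, f i = f 0 ⊓ ⨅ i : Fin n, f i.succ :=
  le_antisymm (le_inf (iInf_le _ 0) (le_iInf fun i => iInf_le _ i.succ))
    (le_iInf <| Fin.cases inf_le_left fun i => inf_le_right.trans (iInf_le _ i))

-- The weight `⊤` makes the supremum finite, so the `toReal` in `mmOf` loses nothing.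
theorem coe_mmOf {A : Type*} {n : ℕ} (x : Fin (n + 1) → A) {α : Fin (n + 1) → EReal}
    (hα : ∃ i, α i = ⊤) (φ : A → ℝ) :
    (mmOf x α φ : EReal) = ⨆ i, min (α i) (φ (x i) : EReal) := by
  obtain ⟨i₀, hi₀⟩ := hα
  obtain ⟨i, hi⟩ := exists_eq_ciSup_of_finite (f := fun i => min (α i) (φ (x i) : EReal))
  refine EReal.coe_toReal ?_ ?_
  · exact hi ▸ ((min_le_right _ _).trans_lt (EReal.coe_lt_top _)).ne
  · refine ((EReal.bot_lt_coe (φ (x i₀))).trans_le ?_).ne'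
    simpa [hi₀] using le_iSup (fun i => min (α i) (φ (x i) : EReal)) i₀

theorem FrE.eq_of_dHatE_lt {A : Type*} {e : A → A → ℝ≥0∞} {μ ν : (A → ℝ) → ℝ} {r : ℝ≥0∞}
    (h : dHatE e μ ν < r) {φ : A → ℝ} (hφ : FrE e r φ) : μ φ = ν φ := by
  obtain ⟨s, ⟨-, hs⟩, hsr⟩ := sInf_lt_iff.mp h
  exact hs φ fun a b hab => hφ a b (hab.trans hsr)

theorem dHatE_le_of_forall_lt {A : Type*} {e : A → A → ℝ≥0∞} {μ ν : (A → ℝ) → ℝ} {c : ℝ≥0∞}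
    (h : ∀ r, c < r → ∀ φ, FrE e r φ → μ φ = ν φ) : dHatE e μ ν ≤ c :=
  le_of_forall_gt_imp_ge_of_dense fun r hr => sInf_le ⟨zero_le.trans_lt hr, h r hr⟩

section

variable {X : Type*}

theorem coe_tensorN_mmOf : ∀ {n : ℕ} {m : Fin n → ℕ} (x : ∀ i, Fin (m i + 1) → X)
    {α : ∀ i, Fin (m i + 1) → EReal}, (∀ i, ∃ k, α i k = ⊤) → ∀ φ : (Fin n → X) → ℝ,
      (tensorN n (fun i => mmOf (x i) (α i)) φ : EReal) =
        ⨆ j : ∀ i, Fin (m i + 1), min (⨅ i, α i (j i)) (φ (fun i => x i (j i)) : EReal)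
  | 0, m, x, α, _, φ => by
    simp [tensorN, Subsingleton.elim (fun i => x i _) Fin.elim0]
  | n + 1, m, x, α, hα, φ => by
    have ih := fun a => coe_tensorN_mmOf (fun i => x i.succ) (fun i => hα i.succ)
      (fun v => φ (Fin.cons a v))
    rw [tensorN, coe_mmOf _ (hα 0), ← (Fin.consEquiv _).iSup_comp, iSup_prod]
    refine iSup_congr fun k => ?_
    rw [ih, inf_iSup_eq]
    refine iSup_congr fun j => ?_
    simp only [Fin.consEquiv_apply, iInf_fin_succ (fun i => α i _), Fin.cons_zero,
      Fin.cons_succ, inf_assoc]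
    congr
    ext i
    exact Fin.cases rfl (fun _ => rfl) i

theorem tensorN_mmOf_comp_perm {n : ℕ} (σ : Equiv.Perm (Fin n)) {m : Fin n → ℕ}
    (x : ∀ i, Fin (m i + 1) → X) {α : ∀ i, Fin (m i + 1) → EReal}
    (hα : ∀ i, ∃ k, α i k = ⊤) {ψ : (Fin n → X) → ℝ} (hψ : ∀ v, ψ (v ∘ σ) = ψ v) :
    tensorN n (fun i => mmOf (x (σ i)) (α (σ i))) ψ =
      tensorN n (fun i => mmOf (x i) (α i)) ψ := by
  apply EReal.coe_injective
  simp only [coe_tensorN_mmOf _ (fun i => hα (σ i)), coe_tensorN_mmOf _ hα]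
  let E : (∀ i, Fin (m i + 1)) ≃ ∀ i, Fin (m (σ i) + 1) :=
    Equiv.piCongrLeft' (fun i => Fin (m i + 1)) σ.symm
  rw [← E.iSup_comp]
  exact iSup_congr fun j => congrArg₂ min (σ.iInf_comp (g := fun i => α i (j i)))
      (congrArg _ (hψ fun i => x i (j i)))

theorem tensorN_comp_perm_of_isMM {n : ℕ} (σ : Equiv.Perm (Fin n))
    {μ : Fin n → (X → ℝ) → ℝ} (hμ : ∀ i, IsMM (μ i))
    {ψ : (Fin n → X) → ℝ} (hψ : ∀ v, ψ (v ∘ σ) = ψ v) :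
    tensorN n (μ ∘ σ) ψ = tensorN n μ ψ := by
  choose m x α _ hα hμ using hμ
  rw [show μ = fun i => mmOf (x i) (α i) from funext hμ]
  exact tensorN_mmOf_comp_perm σ x hα hψ

theorem tensorN_eq_of_forall_FrE [PseudoEMetricSpace X] {r : ℝ≥0∞} :
    ∀ {n : ℕ} {μ ν : Fin n → (X → ℝ) → ℝ}, (∀ i ψ, FrE (eD X) r ψ → μ i ψ = ν i ψ) →
      ∀ {Ψ : (Fin n → X) → ℝ}, (∀ v w, ⨆ i, edist (v i) (w i) < r → Ψ v = Ψ w) →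
        tensorN n μ Ψ = tensorN n ν Ψ
  | 0, _, _, _, _, _ => rfl
  | n + 1, μ, ν, h, Ψ, hΨ => by
    have hcons : ∀ a b v w, max (edist a b) (⨆ i, edist (v i) (w i)) < r →
        Ψ (Fin.cons a v) = Ψ (Fin.cons b w) := fun a b v w hlt =>
      hΨ _ _ (lt_of_le_of_lt (iSup_le (Fin.cases (le_max_left _ _)
        fun i => (le_iSup (fun i => edist (v i) (w i)) i).trans (le_max_right _ _))) hlt)
    have htail : ∀ a, tensorN n (fun i => μ i.succ) (fun v => Ψ (Fin.cons a v)) =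
        tensorN n (fun i => ν i.succ) (fun v => Ψ (Fin.cons a v)) := fun a =>
      tensorN_eq_of_forall_FrE (fun i => h i.succ) fun v w hvw =>
        hcons a a v w (by simpa using hvw)
    simp only [tensorN, htail]
    refine h 0 _ fun a b hab => congrArg (tensorN n _) (funext fun v => hcons a b v v ?_)
    simpa [eD] using hab

theorem Jmap_tensorN_comp_perm {n : ℕ} {Q : Type*} {π : (Fin n → X) → Q}
    (σ : Equiv.Perm (Fin n)) (hπ : ∀ v, π (v ∘ σ) = π v)
    {μ : Fin n → (X → ℝ) → ℝ} (hμ : ∀ i, IsMM (μ i)) :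
    Jmap π (tensorN n (μ ∘ σ)) = Jmap π (tensorN n μ) :=
  funext fun φ => tensorN_comp_perm_of_isMM σ hμ fun v => congrArg φ (hπ v)

end

theorem theta_well_defined_and_nonexpanding_general {X : Type*} [MetricSpace X]
    {n : ℕ} (G : Subgroup (Equiv.Perm (Fin n)))
    {Q : Type*} (π : (Fin n → X) → Q)
    (hπ : ∀ x y : Fin n → X, π x = π y ↔ ∃ σ ∈ G, ∀ i, y i = x (σ i))
    (eQ : Q → Q → ℝ≥0∞)
    (heQ : ∀ x y : Fin n → X,
      eQ (π x) (π y) = ⨅ σ ∈ G, ⨆ i, edist (x i) (y (σ i))) :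
    (∀ μ ν : Fin n → ((X → ℝ) → ℝ),
      (∀ i, IsMM (μ i)) → (∀ i, IsMM (ν i)) →
      (∃ σ ∈ G, ∀ i, ν i = μ (σ i)) →
      Jmap π (tensorN n μ) = Jmap π (tensorN n ν)) ∧
    (∀ μ ν : Fin n → ((X → ℝ) → ℝ),
      (∀ i, IsMM (μ i)) → (∀ i, IsMM (ν i)) →
      dHatE eQ (Jmap π (tensorN n μ)) (Jmap π (tensorN n ν)) ≤
        ⨅ σ ∈ G, ⨆ i, dHatE (eD X) (μ i) (ν (σ i))) := by
  have hπG : ∀ σ ∈ G, ∀ v, π (v ∘ σ) = π v := fun σ hσ v =>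
    ((hπ v (v ∘ σ)).mpr ⟨σ, hσ, fun _ => rfl⟩).symm
  refine ⟨fun μ ν hμ _ ⟨σ, hσ, hνμ⟩ => ?_, fun μ ν hμ hν => le_iInf₂ fun σ hσ => ?_⟩
  · rw [show ν = μ ∘ σ from funext hνμ, Jmap_tensorN_comp_perm σ (hπG σ hσ) hμ]
  rw [← Jmap_tensorN_comp_perm σ (hπG σ hσ) hν]
  refine dHatE_le_of_forall_lt fun r hr φ hφ => tensorN_eq_of_forall_FrE
    (fun i ψ hψ => hψ.eq_of_dHatE_lt ((le_iSup _ i).trans_lt hr)) fun v w hvw => hφ _ _ ?_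
  calc eQ (π v) (π w) ≤ ⨆ i, edist (v i) (w i) := by
        simpa using (heQ v w).trans_le (iInf₂_le 1 G.one_mem)
    _ < r := hvw

/-- For an ultrametric space `(X,d)`, `n ≥ 1` and a subgroup
`G ≤ Sₙ`, the formula `θ_X([μ₁,…,μₙ]) = J_ω(π_{G,X})(μ₁ ⊗ ⋯ ⊗ μₙ)` gives a
well-defined map `θ_X : SPⁿ_G(J_ω(X)) → J_ω(SPⁿ_G(X))` (its value does not
depend on the chosen orbit representative), and `θ_X` is nonexpanding with
respect to the quotient ultrametric
`d̃([x],[y]) = min_{σ ∈ G} max_i d(xᵢ, y_{σ(i)})`. -/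
theorem theta_well_defined_and_nonexpanding {X : Type*} [MetricSpace X]
    (hX : IsUltra X) {n : ℕ} (hn : 1 ≤ n) (G : Subgroup (Equiv.Perm (Fin n)))
    {Q : Type*} (π : (Fin n → X) → Q)
    (hπ : ∀ x y : Fin n → X, π x = π y ↔ ∃ σ ∈ G, ∀ i, y i = x (σ i))
    (eQ : Q → Q → ℝ≥0∞)
    (heQ : ∀ x y : Fin n → X,
      eQ (π x) (π y) = ⨅ σ ∈ G, ⨆ i, edist (x i) (y (σ i))) :
    (∀ μ ν : Fin n → ((X → ℝ) → ℝ),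
      (∀ i, IsMM (μ i)) → (∀ i, IsMM (ν i)) →
      (∃ σ ∈ G, ∀ i, ν i = μ (σ i)) →
      Jmap π (tensorN n μ) = Jmap π (tensorN n ν)) ∧
    (∀ μ ν : Fin n → ((X → ℝ) → ℝ),
      (∀ i, IsMM (μ i)) → (∀ i, IsMM (ν i)) →
      dHatE eQ (Jmap π (tensorN n μ)) (Jmap π (tensorN n ν)) ≤
        ⨅ σ ∈ G, ⨆ i, dHatE (eD X) (μ i) (ν (σ i))) :=
  theta_well_defined_and_nonexpanding_general G π hπ eQ heQ

end
end

section
/- Let (X,d) be an ultrametric space. Then: (i) supp(δ_x) = {x} for every x ∈ X; and (ii) for every M ∈ J_ω(J_ω(X)), supp(ξ_X(M)) = ⋃{supp(μ) : μ ∈ supp(M)}; that is, the support maps constitute a morphism of the monad (J_ω, δ, ξ) into the hyperspace monad (whose unit is the singleton map x ↦ {x} and whose multiplication is the union map). -/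
open scoped ENNReal

noncomputable section

/-- `S` is *the* support of the functional `μ`: `S` is finite, `μ` depends
only on the restriction of its argument to `S`, and `S` is contained in any
finite set with this property. -/
def IsSupportOf {A : Type*} (μ : (A → ℝ) → ℝ) (S : Set A) : Prop :=
  S.Finite ∧
  (∀ φ ψ : A → ℝ, Set.EqOn φ ψ S → μ φ = μ ψ) ∧
  ∀ T : Set A, T.Finite → (∀ φ ψ : A → ℝ, Set.EqOn φ ψ T → μ φ = μ ψ) →
    S ⊆ T

/-!
A max-min measure `∨ᵢ αᵢ ∧ δ_{xᵢ}` with some `αᵢ = ⊤` has support exactly `{xᵢ ∣ αᵢ ≠ ⊥}`: a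
point of weight `⊥` never contributes to the maximum, while a point of weight `> c` outside a set
`T` is detected by a function that equals `c` there and `c - 1` elsewhere. Since `min` distributes
over suprema in `EReal`, `ξ(∨ᵢ αᵢ ∧ δ_{μᵢ})` with `μᵢ = ∨ⱼ βᵢⱼ ∧ δ_{yᵢⱼ}` is
`∨ᵢⱼ (αᵢ ∧ βᵢⱼ) ∧ δ_{yᵢⱼ}`, and `αᵢ ∧ βᵢⱼ ≠ ⊥` iff `αᵢ ≠ ⊥` and `βᵢⱼ ≠ ⊥`; so the support of
`ξ(M)` is the union of the supports of the `μᵢ` in the support of `M`.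
-/

/-- `mmOf` with an arbitrary index type, so that `mult` of a max-min measure of max-min measures
is again one, indexed by a sigma type. -/
def maxMin {A ι : Type*} (x : ι → A) (α : ι → EReal) : (A → ℝ) → ℝ :=
  fun φ => (⨆ i, min (α i) ((φ (x i) : EReal))).toReal

theorem IsSupportOf.unique {A : Type*} {μ : (A → ℝ) → ℝ} {S T : Set A}
    (hS : IsSupportOf μ S) (hT : IsSupportOf μ T) : S = T :=
  (hS.2.2 T hT.1 hT.2.1).antisymm (hT.2.2 S hS.1 hS.2.1)

theorem isSupportOf_dirac {A : Type*} (a : A) : IsSupportOf (dirac a) {a} := by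
  classical
  refine ⟨Set.finite_singleton a, fun φ ψ h => h rfl, fun T _ hT => ?_⟩
  rw [Set.singleton_subset_iff]
  by_contra ha
  have := hT (Function.update 0 a 1) 0 fun b hb =>
    Function.update_of_ne (ne_of_mem_of_not_mem hb ha) _ _
  simp [dirac] at this

section MaxMin

variable {A ι : Type*}

theorem coe_maxMin [Finite ι] {x : ι → A} {α : ι → EReal} (hα : ∃ i, α i = ⊤) (φ : A → ℝ) :
    ((maxMin x α φ : ℝ) : EReal) = ⨆ i, min (α i) ((φ (x i) : EReal)) := by
  obtain ⟨i₀, hi₀⟩ := hα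
  have : Nonempty ι := ⟨i₀⟩
  obtain ⟨i, hi⟩ := exists_eq_ciSup_of_finite (f := fun i => min (α i) ((φ (x i) : EReal)))
  apply EReal.coe_toReal
  · rw [← hi]
    exact ((min_le_right _ _).trans_lt (EReal.coe_lt_top _)).ne
  · exact ne_bot_of_le_ne_bot (EReal.coe_ne_bot (φ (x i₀))) (le_iSup_of_le i₀ (by simp [hi₀]))

theorem isSupportOf_maxMin [Finite ι] (x : ι → A) {α : ι → EReal} (hα : ∃ i, α i = ⊤) :
    IsSupportOf (maxMin x α) (x '' {i | α i ≠ ⊥}) := by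
  refine ⟨(Set.toFinite _).image x, fun φ ψ h => ?_, ?_⟩
  · unfold maxMin
    congr 1
    refine iSup_congr fun i => ?_
    rcases eq_or_ne (α i) ⊥ with hi | hi
    · simp [hi]
    · rw [h ⟨i, hi, rfl⟩]
  · rintro T - hT _ ⟨i₀, hi₀, rfl⟩
    by_contra hT₀
    classical
    obtain ⟨c, -, hc⟩ := EReal.exists_between_coe_real (bot_lt_iff_ne_bot.2 hi₀)
    set ψ : A → ℝ := fun _ => c - 1
    set φ := Function.update ψ (x i₀) c
    have hφψ : maxMin x α φ = maxMin x α ψ :=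
      hT φ ψ fun a ha => Function.update_of_ne (ne_of_mem_of_not_mem ha hT₀) _ _
    have hψ : ((maxMin x α ψ : ℝ) : EReal) ≤ (c - 1 : ℝ) :=
      (coe_maxMin hα ψ).trans_le (iSup_le fun i => min_le_right _ _)
    have hφ : (c : EReal) ≤ maxMin x α φ := by
      rw [coe_maxMin hα]
      exact le_iSup_of_le i₀ (le_min hc.le (by simp [φ]))
    rw [hφψ] at hφ
    have := hφ.trans hψ
    norm_cast at this
    linarith

variable {κ : ι → Type*}

theorem mult_maxMin [∀ i, Finite (κ i)] (y : ∀ i, κ i → A) (β : ∀ i, κ i → EReal)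
    (α : ι → EReal) (hβ : ∀ i, ∃ j, β i j = ⊤) :
    mult (maxMin (fun i => maxMin (y i) (β i)) α) =
      maxMin (fun p : Σ i, κ i => y p.1 p.2) (fun p => min (α p.1) (β p.1 p.2)) := by
  funext φ
  change (⨆ i, min (α i) ((maxMin (y i) (β i) φ : ℝ) : EReal)).toReal = _
  simp only [coe_maxMin (hβ _), inf_iSup_eq]
  simp only [maxMin, iSup_sigma, min_assoc]

theorem image_sigma_min_ne_bot (y : ∀ i, κ i → A) (β : ∀ i, κ i → EReal) (α : ι → EReal) :
    (fun p : Σ i, κ i => y p.1 p.2) '' {p | min (α p.1) (β p.1 p.2) ≠ ⊥} =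
      ⋃ i ∈ {i | α i ≠ ⊥}, y i '' {j | β i j ≠ ⊥} := by
  ext a
  simp [min_eq_bot, not_or, and_assoc]

theorem isSupportOf_mult_maxMin [∀ i, Finite (κ i)] [Finite ι] (y : ∀ i, κ i → A)
    (β : ∀ i, κ i → EReal) {α : ι → EReal} (hα : ∃ i, α i = ⊤) (hβ : ∀ i, ∃ j, β i j = ⊤) :
    IsSupportOf (mult (maxMin (fun i => maxMin (y i) (β i)) α))
      (⋃ i ∈ {i | α i ≠ ⊥}, y i '' {j | β i j ≠ ⊥}) := by
  obtain ⟨i, hi⟩ := hα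
  obtain ⟨j, hj⟩ := hβ i
  rw [mult_maxMin y β α hβ, ← image_sigma_min_ne_bot]
  exact isSupportOf_maxMin _ ⟨⟨i, j⟩, by simp [hi, hj]⟩

end MaxMin

theorem supp_monad_morphism_general {X : Type*} :
    (∀ x : X, IsSupportOf (dirac x) {x}) ∧
    (∀ M : (((X → ℝ) → ℝ) → ℝ) → ℝ, IsMMOn {μ | IsMM μ} M →
      ∀ (S : Set ((X → ℝ) → ℝ)) (s : ((X → ℝ) → ℝ) → Set X),
        IsSupportOf M S → (∀ μ ∈ S, IsSupportOf μ (s μ)) →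
        IsSupportOf (mult M) (⋃ μ ∈ S, s μ)) := by
  refine ⟨isSupportOf_dirac, ?_⟩
  rintro M ⟨m, μ, α, hμ, hα, rfl⟩ S s hS hs
  choose n y β _ hβ hμy using hμ
  obtain rfl : μ = fun i => maxMin (y i) (β i) := funext hμy
  obtain rfl := hS.unique (isSupportOf_maxMin _ hα)
  have hs_eq : ∀ i ∈ {i | α i ≠ ⊥}, s (maxMin (y i) (β i)) = y i '' {j | β i j ≠ ⊥} :=
    fun i hi => (hs _ (Set.mem_image_of_mem _ hi)).unique (isSupportOf_maxMin _ (hβ i))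
  rw [Set.biUnion_image, Set.iUnion₂_congr hs_eq]
  exact isSupportOf_mult_maxMin y β hα hβ

/-- The support maps constitute a morphism of the monad
`(J_ω, δ, ξ)` into the hyperspace monad: (i) `supp(δ_x) = {x}`, and
(ii) for `M ∈ J_ω(J_ω(X))`, `supp(ξ_X(M)) = ⋃ {supp(μ) ∣ μ ∈ supp(M)}`. -/
theorem supp_monad_morphism {X : Type*} [MetricSpace X] (hX : IsUltra X) :
    (∀ x : X, IsSupportOf (dirac x) {x}) ∧
    (∀ M : (((X → ℝ) → ℝ) → ℝ) → ℝ, IsMMOn {μ | IsMM μ} M →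
      ∀ (S : Set ((X → ℝ) → ℝ)) (s : ((X → ℝ) → ℝ) → Set X),
        IsSupportOf M S → (∀ μ ∈ S, IsSupportOf μ (s μ)) →
        IsSupportOf (mult M) (⋃ μ ∈ S, s μ)) :=
  supp_monad_morphism_general

end
end
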